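/- arXiv:2312.10500 — 6 statements merged into one kernel-verified Lean document; each statement's English description precedes it below -/
import Mathlib

section
/- Let A ⊂ ℝ^n be a finite set of vectors with nonnegative coordinates, let β ∈ ℝ^n, and let f(x) = Σ_{α∈A} c_α exp(⟨α,x⟩) − d·exp(⟨β,x⟩) with c_α ≥ 0 for all α ∈ A and d > 0. Set A' = {α ∈ A : supp(α) ⊆ supp(β)}, where supp(α) = {i : α_i ≠ 0}, and f̃(x) = Σ_{α∈A'} c_α exp(⟨α,x⟩) − d·exp(⟨β,x⟩). Then f ∈ C_AGE(A,β) if and only if f̃ ∈ C_AGE(A',β); equivalently, f(x) ≥ 0 for all x ∈ ℝ^n if and only if f̃(x) ≥ 0 for all x ∈ ℝ^n. -/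
open Finset

noncomputable def dotp {n : ℕ} (a x : Fin n → ℝ) : ℝ := ∑ i, a i * x i

noncomputable def monom {n : ℕ} (α : Fin n → ℕ) (x : Fin n → ℝ) : ℝ := ∏ i, x i ^ α i

/-- The AGE cone `C_AGE(A, β)`: nonnegative signomials supported on `A ∪ {β}` whose
coefficients on `A` are nonnegative (only the `β`-term may be negative). -/
def IsAGE {n : ℕ} (A : Finset (Fin n → ℝ)) (β : Fin n → ℝ) (f : (Fin n → ℝ) → ℝ) : Prop :=
  ∃ c : (Fin n → ℝ) → ℝ, (∀ α ∈ A, 0 ≤ c α) ∧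
    (∀ x, f x = (∑ α ∈ A, c α * Real.exp (dotp α x)) + c β * Real.exp (dotp β x)) ∧
    (∀ x, 0 ≤ f x)

/-- The SAGE cone `C_SAGE(T) = Σ_{β ∈ T} C_AGE(T \ {β}, β)`. -/
def IsSAGE {n : ℕ} (T : Finset (Fin n → ℝ)) (f : (Fin n → ℝ) → ℝ) : Prop :=
  ∃ g : (Fin n → ℝ) → ((Fin n → ℝ) → ℝ),
    (∀ β ∈ T, IsAGE (T.erase β) β (g β)) ∧ (∀ x, f x = ∑ β ∈ T, g β x)

/-- `f^SAGE = sup {l : f - l ∈ C_SAGE(T ∪ {0})}`, as an extended real number. -/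
noncomputable def sageBound {n : ℕ} (T : Finset (Fin n → ℝ)) (f : (Fin n → ℝ) → ℝ) : EReal :=
  sSup ((fun l : ℝ => (l : EReal)) '' {l : ℝ | IsSAGE (insert 0 T) (fun x => f x - l)})

/-- `f* = inf_{x ∈ ℝⁿ} f(x)`, as an extended real number. -/
noncomputable def infStar {n : ℕ} (f : (Fin n → ℝ) → ℝ) : EReal := ⨅ x, (f x : EReal)

/-- The AG cone `C_AG(A, β)` of nonnegative polynomials with nonnegative coefficients
on `A`, vanishing coefficients on non-even points of `A`, and possibly negative
coefficient on `β`. -/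
def IsAG {n : ℕ} (A : Finset (Fin n → ℕ)) (β : Fin n → ℕ) (f : (Fin n → ℝ) → ℝ) : Prop :=
  ∃ c : (Fin n → ℕ) → ℝ, (∀ α ∈ A, 0 ≤ c α) ∧
    (∀ γ ∈ A, (¬ ∀ i, Even (γ i)) → c γ = 0) ∧
    (∀ x, f x = (∑ α ∈ A, c α * monom α x) + c β * monom β x) ∧
    (∀ x, 0 ≤ f x)

/-- The SONC cone `C_SONC(T) = Σ_{β ∈ T} C_AG(T \ {β}, β)`. -/
def IsSONC {n : ℕ} (T : Finset (Fin n → ℕ)) (f : (Fin n → ℝ) → ℝ) : Prop :=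
  ∃ g : (Fin n → ℕ) → ((Fin n → ℝ) → ℝ),
    (∀ β ∈ T, IsAG (T.erase β) β (g β)) ∧ (∀ x, f x = ∑ β ∈ T, g β x)

/-- `f^SONC = sup {l : f - l ∈ C_SONC(T ∪ {0})}`, as an extended real number. -/
noncomputable def soncBound {n : ℕ} (T : Finset (Fin n → ℕ)) (f : (Fin n → ℝ) → ℝ) : EReal :=
  sSup ((fun l : ℝ => (l : EReal)) '' {l : ℝ | IsSONC (insert 0 T) (fun x => f x - l)})

/-- Action of a permutation on a real vector: `(σ·x) i = x (σ⁻¹ i)`. -/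
def permAct {n : ℕ} (σ : Equiv.Perm (Fin n)) (x : Fin n → ℝ) : Fin n → ℝ := fun i => x (σ⁻¹ i)

/-- Action of a permutation on an exponent vector. -/
def permActN {m : ℕ} (σ : Equiv.Perm (Fin m)) (x : Fin m → ℕ) : Fin m → ℕ := fun i => x (σ⁻¹ i)

/-- The orbit of a vector under the symmetric group, as a finite set. -/
noncomputable def orbitF {n : ℕ} (v : Fin n → ℝ) : Finset (Fin n → ℝ) :=
  Finset.univ.image (fun σ : Equiv.Perm (Fin n) => permAct σ v)

/-- The monomial mean `m_α^{(m)}(x) = (1/m!) Σ_{σ ∈ S_m} x^{σ(α)}`. -/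
noncomputable def mmean {m : ℕ} (α : Fin m → ℕ) (x : Fin m → ℝ) : ℝ :=
  (1/(m.factorial : ℝ)) * ∑ σ : Equiv.Perm (Fin m), monom (permActN σ α) x

/-- Proposition (support restriction of AGE signomials): with nonnegative exponent
vectors in `A` and `A' = {α ∈ A : supp α ⊆ supp β}`, the signomial
`f = Σ_{α∈A} c_α e^{⟨α,x⟩} - d e^{⟨β,x⟩}` is AGE iff
`f̃ = Σ_{α∈A'} c_α e^{⟨α,x⟩} - d e^{⟨β,x⟩}` is AGE; equivalently, `f ≥ 0` iff `f̃ ≥ 0`. -/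
theorem stmt0 {n : ℕ} (A : Finset (Fin n → ℝ)) (β : Fin n → ℝ) (hβ : β ∉ A)
    (hA : ∀ α ∈ A, ∀ i, 0 ≤ α i)
    (c : (Fin n → ℝ) → ℝ) (hc : ∀ α ∈ A, 0 ≤ c α) (d : ℝ) (hd : 0 < d)
    (f ftil : (Fin n → ℝ) → ℝ)
    (hf : ∀ x, f x = (∑ α ∈ A, c α * Real.exp (dotp α x)) - d * Real.exp (dotp β x))
    (A' : Finset (Fin n → ℝ))
    (hA' : A' = A.filter (fun α => ∀ i, α i ≠ 0 → β i ≠ 0))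
    (hftil : ∀ x, ftil x = (∑ α ∈ A', c α * Real.exp (dotp α x)) - d * Real.exp (dotp β x)) :
    (IsAGE A β f ↔ IsAGE A' β ftil) ∧ ((∀ x, 0 ≤ f x) ↔ (∀ x, 0 ≤ ftil x)) := by
  classical
  subst hA'
  have hsub : A.filter (fun α => ∀ i, α i ≠ 0 → β i ≠ 0) ⊆ A := Finset.filter_subset _ _
  have hβ' : β ∉ A.filter (fun α => ∀ i, α i ≠ 0 → β i ≠ 0) := fun h => hβ (hsub h)
  have hsplit : ∀ x, f x = ftil x +
      ∑ α ∈ A.filter (fun α => ¬ ∀ i, α i ≠ 0 → β i ≠ 0), c α * Real.exp (dotp α x) := by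
    intro x
    rw [hf x, hftil x,
      ← Finset.sum_filter_add_sum_filter_not A (fun α => ∀ i, α i ≠ 0 → β i ≠ 0)
        (fun α => c α * Real.exp (dotp α x))]
    ring
  have hnn : ∀ x, (0:ℝ) ≤ ∑ α ∈ A.filter (fun α => ¬ ∀ i, α i ≠ 0 → β i ≠ 0),
      c α * Real.exp (dotp α x) := by
    intro x
    exact Finset.sum_nonneg fun α hα =>
      mul_nonneg (hc α (Finset.filter_subset _ _ hα)) (Real.exp_nonneg _)
  have hforward : (∀ x, 0 ≤ ftil x) → ∀ x, 0 ≤ f x := by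
    intro h x
    rw [hsplit x]
    have := hnn x
    linarith [h x]
  have hback : (∀ x, 0 ≤ f x) → ∀ x, 0 ≤ ftil x := by
    intro h x
    set xt : ℝ → (Fin n → ℝ) := fun t i => if β i ≠ 0 then x i else -t with hxt
    have hdβ : ∀ t, dotp β (xt t) = dotp β x := by
      intro t; unfold dotp; apply Finset.sum_congr rfl; intro i _
      by_cases hb : β i = 0 <;> simp [hxt, hb]
    have hdA' : ∀ α, (∀ i, α i ≠ 0 → β i ≠ 0) → ∀ t, dotp α (xt t) = dotp α x := by
      intro α hα t; unfold dotp; apply Finset.sum_congr rfl; intro i _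
      by_cases hb : β i = 0
      · have hz : α i = 0 := by by_contra hne; exact (hα i hne) hb
        simp [hz]
      · simp [hxt, hb]
    have hdB : ∀ α ∈ A.filter (fun α => ¬ ∀ i, α i ≠ 0 → β i ≠ 0),
        ∃ K S : ℝ, 0 < S ∧ ∀ t, dotp α (xt t) = K + S * (-t) := by
      intro α hαB
      obtain ⟨hαA, hnp⟩ := Finset.mem_filter.mp hαB
      push_neg at hnp
      obtain ⟨i0, hi0, hbi0⟩ := hnp
      refine ⟨∑ i, if β i ≠ 0 then α i * x i else 0,
        ∑ i, if β i ≠ 0 then 0 else α i, ?_, ?_⟩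
      · apply Finset.sum_pos'
        · intro i _; by_cases hb : β i = 0 <;> simp [hb, hA α hαA i]
        · refine ⟨i0, Finset.mem_univ _, ?_⟩
          simp only [hbi0, ne_eq, not_true_eq_false, if_neg, if_false]
          exact lt_of_le_of_ne (hA α hαA i0) (Ne.symm hi0)
      · intro t
        unfold dotp
        rw [Finset.sum_mul, ← Finset.sum_add_distrib]
        apply Finset.sum_congr rfl; intro i _
        by_cases hb : β i = 0 <;> simp [hxt, hb] <;> ring
    have hR : Filter.Tendsto
        (fun t => ∑ α ∈ A.filter (fun α => ¬ ∀ i, α i ≠ 0 → β i ≠ 0),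
          c α * Real.exp (dotp α (xt t))) Filter.atTop (nhds 0) := by
      have key : Filter.Tendsto
          (fun t => ∑ α ∈ A.filter (fun α => ¬ ∀ i, α i ≠ 0 → β i ≠ 0),
            c α * Real.exp (dotp α (xt t))) Filter.atTop
          (nhds (∑ _α ∈ A.filter (fun α => ¬ ∀ i, α i ≠ 0 → β i ≠ 0), (0:ℝ))) := by
        apply tendsto_finset_sum
        intro α hα
        obtain ⟨K, S, hS, hKS⟩ := hdB α hα
        have h1 : Filter.Tendsto (fun t : ℝ => K + S * (-t)) Filter.atTop Filter.atBot := by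
          apply Filter.tendsto_atBot_add_const_left
          exact (Filter.tendsto_const_mul_atBot_of_pos hS).mpr Filter.tendsto_neg_atTop_atBot
        have h2 := Real.tendsto_exp_atBot.comp h1
        have h3 := h2.const_mul (c α)
        rw [mul_zero] at h3
        apply h3.congr
        intro t
        simp [Function.comp, hKS t]
      simpa using key
    have hlim : Filter.Tendsto (fun t => f (xt t)) Filter.atTop (nhds (ftil x)) := by
      have heq : ∀ t, f (xt t) = ftil x +
          ∑ α ∈ A.filter (fun α => ¬ ∀ i, α i ≠ 0 → β i ≠ 0),
            c α * Real.exp (dotp α (xt t)) := by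
        intro t
        rw [hsplit (xt t), hftil (xt t), hftil x, hdβ t]
        congr 2
        apply Finset.sum_congr rfl
        intro α hα
        rw [hdA' α (Finset.mem_filter.mp hα).2 t]
      have := (tendsto_const_nhds (x := ftil x) (f := Filter.atTop (α := ℝ))).add hR
      rw [add_zero] at this
      exact this.congr fun t => (heq t).symm
    exact ge_of_tendsto' hlim fun t => h (xt t)
  have hAGEmk : ∀ (S : Finset (Fin n → ℝ)) (g : (Fin n → ℝ) → ℝ), β ∉ S → S ⊆ A →
      (∀ x, g x = (∑ α ∈ S, c α * Real.exp (dotp α x)) - d * Real.exp (dotp β x)) →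
      (∀ x, 0 ≤ g x) → IsAGE S β g := by
    intro S g hβS hSA hg hnng
    refine ⟨fun γ => if γ = β then -d else c γ, ?_, ?_, hnng⟩
    · intro α hα
      show (0:ℝ) ≤ if α = β then -d else c α
      rw [if_neg (fun he : α = β => hβS (he ▸ hα))]
      exact hc α (hSA hα)
    · intro x
      rw [hg x]
      show _ = (∑ α ∈ S, (if α = β then -d else c α) * Real.exp (dotp α x)) +
        (if β = β then -d else c β) * Real.exp (dotp β x)
      have h1 : ∑ α ∈ S, (if α = β then -d else c α) * Real.exp (dotp α x)
          = ∑ α ∈ S, c α * Real.exp (dotp α x) := by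
        apply Finset.sum_congr rfl
        intro α hα
        rw [if_neg (fun he : α = β => hβS (he ▸ hα))]
      rw [h1, if_pos rfl]
      ring
  constructor
  · constructor
    · rintro ⟨c', _, _, hpos⟩
      exact hAGEmk _ ftil hβ' hsub hftil (hback hpos)
    · rintro ⟨c', _, _, hpos⟩
      exact hAGEmk A f hβ (le_refl A) hf (hforward hpos)
  · exact ⟨hback, hforward⟩
end

section
/- Let f(x) = Σ_{α∈A} c_α exp(⟨α,x⟩) + Σ_{β∈B} c_β exp(⟨β,x⟩) be a signomial with finite disjoint support sets A, B ⊂ ℝ^n, with c_α > 0 for all α ∈ A. Assume B ⊆ relint(conv(A ∪ {0})), the relative interior of the convex hull of A together with the origin. Then f^SAGE > −∞, i.e., there exists λ ∈ ℝ with f − λ ∈ C_SAGE(A ∪ B ∪ {0}). -/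
open Finset

theorem stretch {n : ℕ} {K : Set (Fin n → ℝ)} (hK0 : (0 : Fin n → ℝ) ∈ K)
    {β : Fin n → ℝ} (hβ : β ∈ intrinsicInterior ℝ K) :
    ∃ δ : ℝ, 0 < δ ∧ (1 + δ) • β ∈ K := by
  obtain ⟨y, hy, hyβ⟩ := hβ
  have hβK : β ∈ K := intrinsicInterior_subset ⟨y, hy, hyβ⟩
  have h0s : (0 : Fin n → ℝ) ∈ affineSpan ℝ K := subset_affineSpan ℝ K hK0
  have hβs : β ∈ affineSpan ℝ K := subset_affineSpan ℝ K hβK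
  have hmem : ∀ t : ℝ, (1 + t) • β ∈ affineSpan ℝ K := by
    intro t
    have := AffineMap.lineMap_mem (1 + t) h0s hβs
    simpa [AffineMap.lineMap_apply] using this
  set φ : ℝ → affineSpan ℝ K := fun t => ⟨(1 + t) • β, hmem t⟩ with hφ
  have hcont : Continuous φ := by
    apply Continuous.subtype_mk
    exact (continuous_const.add continuous_id).smul continuous_const
  have hopen : IsOpen (φ ⁻¹' interior ((↑) ⁻¹' K : Set (affineSpan ℝ K))) :=
    isOpen_interior.preimage hcont
  have h0mem : (0 : ℝ) ∈ φ ⁻¹' interior ((↑) ⁻¹' K : Set (affineSpan ℝ K)) := by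
    have : φ 0 = y := by
      apply Subtype.ext
      simp [hφ, hyβ]
    simpa [Set.mem_preimage, this] using hy
  rw [Metric.isOpen_iff] at hopen
  obtain ⟨ε, hε, hball⟩ := hopen 0 h0mem
  refine ⟨ε / 2, by linarith, ?_⟩
  have : (ε / 2 : ℝ) ∈ Metric.ball (0 : ℝ) ε := by
    simp [Real.dist_eq, abs_of_pos]; rw [abs_of_pos] <;> linarith
  have h2 := hball this
  have h3 : φ (ε/2) ∈ ((↑) ⁻¹' K : Set (affineSpan ℝ K)) := interior_subset h2
  simpa [hφ] using h3

theorem weights {n : ℕ} (A : Finset (Fin n → ℝ)) {β : Fin n → ℝ}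
    (hβ : β ∈ intrinsicInterior ℝ (convexHull ℝ ((↑A : Set (Fin n → ℝ)) ∪ {0}))) :
    ∃ w : (Fin n → ℝ) → ℝ, (∀ α ∈ insert 0 A, 0 ≤ w α) ∧ 0 < w 0 ∧
      (∑ α ∈ insert 0 A, w α) = 1 ∧ (∑ α ∈ insert 0 A, w α • α) = β := by
  set S : Finset (Fin n → ℝ) := insert 0 A with hS
  have hcoe : (↑A : Set (Fin n → ℝ)) ∪ {0} = (↑S : Set (Fin n → ℝ)) := by
    rw [hS, coe_insert, Set.union_comm]; rfl
  rw [hcoe] at hβ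
  have h0S : (0 : Fin n → ℝ) ∈ S := mem_insert_self _ _
  have hK0 : (0 : Fin n → ℝ) ∈ convexHull ℝ (↑S : Set (Fin n → ℝ)) :=
    subset_convexHull ℝ _ (by exact_mod_cast h0S)
  obtain ⟨δ, hδ, hδβ⟩ := stretch hK0 hβ
  rw [Finset.convexHull_eq] at hδβ
  obtain ⟨v, hv0, hv1, hvc⟩ := hδβ
  rw [Finset.centerMass_eq_of_sum_1 _ _ hv1] at hvc
  simp only [id] at hvc
  have h1δ : (0:ℝ) < 1 + δ := by linarith
  refine ⟨fun γ => (1/(1+δ)) * v γ + if γ = 0 then δ/(1+δ) else 0, ?_, ?_, ?_, ?_⟩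
  · intro α hα
    have := hv0 α hα
    positivity
  · have := hv0 0 h0S
    have h2 : (0:ℝ) < δ/(1+δ) := by positivity
    simp only []
    rw [if_pos trivial]
    have h3 : (0:ℝ) ≤ 1/(1+δ) * v 0 := by positivity
    linarith
  · rw [Finset.sum_add_distrib, ← Finset.mul_sum, hv1, Finset.sum_ite_eq' S 0 (fun _ => δ/(1+δ)),
      if_pos h0S]
    field_simp
  · have : (∑ α ∈ S, ((1/(1+δ)) * v α + if α = 0 then δ/(1+δ) else 0) • α)
        = (1/(1+δ)) • (∑ α ∈ S, v α • α) + ∑ α ∈ S, (if α = 0 then δ/(1+δ) else 0) • α := by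
      rw [Finset.smul_sum, ← Finset.sum_add_distrib]
      refine Finset.sum_congr rfl fun α _ => ?_
      rw [add_smul, smul_smul]
    rw [this, hvc]
    have h2 : (∑ α ∈ S, (if α = 0 then δ/(1+δ) else 0) • α) = 0 := by
      apply Finset.sum_eq_zero
      intro α hα
      by_cases h : α = 0 <;> simp [h]
    rw [h2, add_zero, smul_smul]
    rw [one_div, inv_mul_cancel₀ (ne_of_gt h1δ), one_smul]

theorem dotp_sum {n : ℕ} (S : Finset (Fin n → ℝ)) (w : (Fin n → ℝ) → ℝ) (x : Fin n → ℝ) :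
    dotp (∑ α ∈ S, w α • α) x = ∑ α ∈ S, w α * dotp α x := by
  unfold dotp
  simp only [Finset.sum_apply, Pi.smul_apply, smul_eq_mul, Finset.sum_mul, Finset.mul_sum]
  rw [Finset.sum_comm]
  refine Finset.sum_congr rfl fun α _ => ?_
  refine Finset.sum_congr rfl fun i _ => ?_
  ring

/-- AM-GM / Jensen domination with small coefficients away from 0. -/

theorem age_dom {n : ℕ} (A : Finset (Fin n → ℝ)) (w : (Fin n → ℝ) → ℝ) (β : Fin n → ℝ)
    (hw0 : ∀ α ∈ insert 0 A, 0 ≤ w α) (hwpos : 0 < w 0)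
    (hw1 : (∑ α ∈ insert 0 A, w α) = 1) (hwβ : (∑ α ∈ insert 0 A, w α • α) = β)
    {ε : ℝ} (hε : 0 < ε) :
    ∃ d : (Fin n → ℝ) → ℝ, (∀ α ∈ insert 0 A, 0 ≤ d α) ∧
      (∀ α ∈ insert 0 A, α ≠ 0 → d α ≤ ε) ∧
      (∀ x, Real.exp (dotp β x) ≤ ∑ α ∈ insert 0 A, d α * Real.exp (dotp α x)) := by
  classical
  set S : Finset (Fin n → ℝ) := insert 0 A with hS
  have h0S : (0 : Fin n → ℝ) ∈ S := mem_insert_self _ _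
  set s : ℝ := -(∑ α ∈ S.erase 0, w α * Real.log ε) / w 0 with hs
  set t : (Fin n → ℝ) → ℝ := fun α => if α = 0 then s else Real.log ε with ht
  have hwt : (∑ α ∈ S, w α * t α) = 0 := by
    rw [← Finset.add_sum_erase S _ h0S]
    have h1 : w 0 * t 0 = -(∑ α ∈ S.erase 0, w α * Real.log ε) := by
      rw [ht]; simp only []
      rw [if_pos trivial, mul_div_cancel₀ _ (ne_of_gt hwpos)]
    rw [h1]
    have h2 : (∑ α ∈ S.erase 0, w α * t α) = ∑ α ∈ S.erase 0, w α * Real.log ε := by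
      refine Finset.sum_congr rfl fun α hα => ?_
      rw [ht]; simp only [if_neg (Finset.ne_of_mem_erase hα)]
    rw [h2]; ring
  refine ⟨fun α => w α * Real.exp (t α), ?_, ?_, ?_⟩
  · intro α hα; exact mul_nonneg (hw0 α hα) (Real.exp_pos _).le
  · intro α hα hα0
    have h1 : t α = Real.log ε := by rw [ht]; simp [hα0]
    show w α * Real.exp (t α) ≤ ε
    rw [h1, Real.exp_log hε]
    have h2 : w α ≤ 1 := by
      rw [← hw1]
      exact Finset.single_le_sum (fun γ hγ => hw0 γ hγ) hα
    nlinarith [hw0 α hα]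
  · intro x
    have jensen := convexOn_exp.map_sum_le (t := S) (w := w) (p := fun α => dotp α x + t α)
      hw0 hw1 (fun _ _ => Set.mem_univ _)
    have key : (∑ α ∈ S, w α • (dotp α x + t α)) = dotp β x := by
      simp only [smul_eq_mul, mul_add]
      rw [Finset.sum_add_distrib, hwt, add_zero, ← dotp_sum S w x, hwβ]
    rw [key] at jensen
    refine le_trans jensen (le_of_eq ?_)
    refine Finset.sum_congr rfl fun α _ => ?_
    rw [smul_eq_mul, Real.exp_add]; ring

/-- Proposition (finiteness of the SAGE bound): if all coefficients on `A` are positive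
and `B ⊆ relint(conv(A ∪ {0}))`, then `f^SAGE > -∞`, i.e. there is `l ∈ ℝ` with
`f - l ∈ C_SAGE(A ∪ B ∪ {0})`. -/
theorem stmt1 {n : ℕ} (A B : Finset (Fin n → ℝ)) (hdisj : Disjoint A B)
    (c : (Fin n → ℝ) → ℝ) (hcA : ∀ α ∈ A, 0 < c α)
    (hB : ∀ β ∈ B, β ∈ intrinsicInterior ℝ (convexHull ℝ ((↑A : Set (Fin n → ℝ)) ∪ {0})))
    (f : (Fin n → ℝ) → ℝ)
    (hf : ∀ x, f x = (∑ α ∈ A, c α * Real.exp (dotp α x))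
                   + ∑ β ∈ B, c β * Real.exp (dotp β x)) :
    ∃ l : ℝ, IsSAGE (insert 0 (A ∪ B)) (fun x => f x - l) := by
  classical
  set T : Finset (Fin n → ℝ) := insert 0 (A ∪ B) with hT
  set S : Finset (Fin n → ℝ) := insert 0 A with hSdef
  have hST : S ⊆ T := by
    intro γ hγ
    rcases Finset.mem_insert.1 hγ with h | h
    · exact h ▸ Finset.mem_insert_self _ _
    · exact Finset.mem_insert_of_mem (Finset.mem_union_left _ h)
  have hAT : A ⊆ T := fun γ h => hST (Finset.mem_insert_of_mem h)
  have hBT : B ⊆ T := fun γ h => Finset.mem_insert_of_mem (Finset.mem_union_right _ h)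
  set N : Finset (Fin n → ℝ) := B.filter (fun β => c β < 0 ∧ β ≠ 0) with hNdef
  have hNB : N ⊆ B := Finset.filter_subset _ _
  have hNprop : ∀ β ∈ N, c β < 0 ∧ β ≠ 0 := fun β hβ => (Finset.mem_filter.1 hβ).2
  set M : ℝ := ∑ β ∈ N, (-c β) with hMdef
  have hM0 : 0 ≤ M := Finset.sum_nonneg fun β hβ => by linarith [(hNprop β hβ).1]
  -- choose ε
  obtain ⟨ε, hεpos, hεM⟩ : ∃ ε : ℝ, 0 < ε ∧ ∀ γ ∈ A, ε * M ≤ c γ := by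
    by_cases hA : A.Nonempty
    · refine ⟨(A.inf' hA c) / (M + 1), ?_, ?_⟩
      · have : 0 < A.inf' hA c := by
          rw [Finset.lt_inf'_iff]
          exact fun γ hγ => hcA γ hγ
        positivity
      · intro γ hγ
        have h1 : A.inf' hA c ≤ c γ := Finset.inf'_le _ hγ
        have h2 : 0 < A.inf' hA c := by
          rw [Finset.lt_inf'_iff]; exact fun γ hγ => hcA γ hγ
        rw [div_mul_eq_mul_div, div_le_iff₀ (by linarith)]
        nlinarith
    · exact ⟨1, one_pos, fun γ hγ => absurd ⟨γ, hγ⟩ hA⟩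
  -- choose dominating coefficients for each β ∈ N
  have hrep : ∀ β ∈ N, ∃ d : (Fin n → ℝ) → ℝ, (∀ α ∈ S, 0 ≤ d α) ∧
      (∀ α ∈ S, α ≠ 0 → d α ≤ ε) ∧
      (∀ x, Real.exp (dotp β x) ≤ ∑ α ∈ S, d α * Real.exp (dotp α x)) := by
    intro β hβ
    obtain ⟨w, hw0, hwpos, hw1, hwβ⟩ := weights A (hB β (hNB hβ))
    exact age_dom A w β hw0 hwpos hw1 hwβ hεpos
  choose! d hd1 hd2 hd3 using hrep
  -- the AGE functions with apex β for β ∈ N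
  set gN : (Fin n → ℝ) → (Fin n → ℝ) → ℝ :=
    fun β x => (∑ α ∈ S, ((-c β) * d β α) * Real.exp (dotp α x)) + c β * Real.exp (dotp β x)
    with hgN
  -- coefficient function of f - Σ_N gN
  set Q : (Fin n → ℝ) → ℝ := fun γ =>
    (if γ ∈ A then c γ else 0) + (if γ ∈ B ∧ γ ∉ N then c γ else 0)
      + ∑ β ∈ N, c β * (if γ ∈ S then d β γ else 0) with hQ
  -- key identity
  have key : ∀ x, f x - ∑ β ∈ N, gN β x = ∑ γ ∈ T, Q γ * Real.exp (dotp γ x) := by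
    intro x
    have e1 : ∑ γ ∈ T, (if γ ∈ A then c γ else 0) * Real.exp (dotp γ x)
        = ∑ γ ∈ A, c γ * Real.exp (dotp γ x) := by
      rw [← Finset.sum_subset hAT (fun γ _ hγ => by rw [if_neg hγ, zero_mul])]
      exact Finset.sum_congr rfl fun γ hγ => by rw [if_pos hγ]
    have e2 : ∑ γ ∈ T, (if γ ∈ B ∧ γ ∉ N then c γ else 0) * Real.exp (dotp γ x)
        = (∑ γ ∈ B, c γ * Real.exp (dotp γ x)) - ∑ γ ∈ N, c γ * Real.exp (dotp γ x) := by
      have hBsplit := Finset.sum_filter_add_sum_filter_not B (fun γ => γ ∈ N)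
        (fun γ => c γ * Real.exp (dotp γ x))
      have hfN : B.filter (fun γ => γ ∈ N) = N := by
        ext γ
        simp only [Finset.mem_filter]
        exact ⟨fun h => h.2, fun h => ⟨hNB h, h⟩⟩
      have hsub : B.filter (fun γ => γ ∉ N) ⊆ T := fun γ h => hBT (Finset.filter_subset _ _ h)
      have lhseq : ∑ γ ∈ T, (if γ ∈ B ∧ γ ∉ N then c γ else 0) * Real.exp (dotp γ x)
          = ∑ γ ∈ B.filter (fun γ => γ ∉ N), c γ * Real.exp (dotp γ x) := by
        rw [← Finset.sum_subset hsub (fun γ hγT hγ => ?_)]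
        · refine Finset.sum_congr rfl fun γ hγ => ?_
          have := Finset.mem_filter.1 hγ
          rw [if_pos ⟨this.1, this.2⟩]
        · have : ¬(γ ∈ B ∧ γ ∉ N) := by
            intro hc
            exact hγ (Finset.mem_filter.2 ⟨hc.1, hc.2⟩)
          rw [if_neg this, zero_mul]
      rw [lhseq]
      rw [hfN] at hBsplit
      linarith
    have e3 : ∑ γ ∈ T, (∑ β ∈ N, c β * (if γ ∈ S then d β γ else 0)) * Real.exp (dotp γ x)
        = ∑ β ∈ N, c β * ∑ α ∈ S, d β α * Real.exp (dotp α x) := by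
      simp only [Finset.sum_mul]
      rw [Finset.sum_comm]
      refine Finset.sum_congr rfl fun β hβ => ?_
      rw [Finset.mul_sum]
      rw [← Finset.sum_subset hST (fun γ _ hγ => by rw [if_neg hγ]; ring)]
      refine Finset.sum_congr rfl fun γ hγ => ?_
      rw [if_pos hγ]; ring
    have egN : ∑ β ∈ N, gN β x
        = (∑ β ∈ N, c β * Real.exp (dotp β x))
          - ∑ β ∈ N, c β * ∑ α ∈ S, d β α * Real.exp (dotp α x) := by
      rw [← Finset.sum_sub_distrib]
      refine Finset.sum_congr rfl fun β hβ => ?_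
      show (∑ α ∈ S, ((-c β) * d β α) * Real.exp (dotp α x)) + c β * Real.exp (dotp β x) = _
      rw [Finset.mul_sum]
      have : ∑ α ∈ S, ((-c β) * d β α) * Real.exp (dotp α x)
          = -(∑ α ∈ S, c β * (d β α * Real.exp (dotp α x))) := by
        rw [← Finset.sum_neg_distrib]
        exact Finset.sum_congr rfl fun α _ => by ring
      rw [this]; ring
    have eQ : ∑ γ ∈ T, Q γ * Real.exp (dotp γ x)
        = (∑ γ ∈ T, (if γ ∈ A then c γ else 0) * Real.exp (dotp γ x))
        + (∑ γ ∈ T, (if γ ∈ B ∧ γ ∉ N then c γ else 0) * Real.exp (dotp γ x))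
        + ∑ γ ∈ T, (∑ β ∈ N, c β * (if γ ∈ S then d β γ else 0)) * Real.exp (dotp γ x) := by
      simp only [hQ, add_mul, Finset.sum_add_distrib]
    rw [hf x, egN, eQ, e1, e2, e3]
    ring
  -- nonnegativity of Q away from 0
  have hQnn : ∀ γ ∈ T.erase 0, 0 ≤ Q γ := by
    intro γ hγ
    have hγ0 : γ ≠ 0 := Finset.ne_of_mem_erase hγ
    have hγT : γ ∈ T := Finset.mem_of_mem_erase hγ
    rcases Finset.mem_insert.1 hγT with h | h
    · exact absurd h hγ0
    rcases Finset.mem_union.1 h with hA | hBm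
    · -- γ ∈ A
      have hnB : γ ∉ B := Finset.disjoint_left.1 hdisj hA
      have hγS : γ ∈ S := Finset.mem_insert_of_mem hA
      have hterm : ∀ β ∈ N, (-c β) * ε ≥ -(c β * (if γ ∈ S then d β γ else 0)) := by
        intro β hβ
        rw [if_pos hγS]
        have hdle := hd2 β hβ γ hγS hγ0
        have hdnn := hd1 β hβ γ hγS
        have hcβ := (hNprop β hβ).1
        nlinarith
      have hsum : -(∑ β ∈ N, c β * (if γ ∈ S then d β γ else 0)) ≤ ε * M := by
        rw [← Finset.sum_neg_distrib]
        rw [hMdef, Finset.mul_sum]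
        refine Finset.sum_le_sum fun β hβ => ?_
        have := hterm β hβ
        linarith
      have hQγ : Q γ = c γ + ∑ β ∈ N, c β * (if γ ∈ S then d β γ else 0) := by
        rw [hQ]
        simp only [if_pos hA, if_neg (fun hc : γ ∈ B ∧ γ ∉ N => hnB hc.1), add_zero, zero_add]
      rw [hQγ]
      have := hεM γ hA
      linarith
    · -- γ ∈ B
      have hnA : γ ∉ A := Finset.disjoint_right.1 hdisj hBm
      have hγS : γ ∉ S := by
        intro hc
        rcases Finset.mem_insert.1 hc with h' | h'
        · exact hγ0 h'
        · exact hnA h'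
      have hthird : ∑ β ∈ N, c β * (if γ ∈ S then d β γ else 0) = 0 :=
        Finset.sum_eq_zero fun β _ => by rw [if_neg hγS, mul_zero]
      by_cases hγN : γ ∈ N
      · have hQγ : Q γ = 0 := by
          rw [hQ]
          simp only [if_neg hnA, if_neg (fun hc : γ ∈ B ∧ γ ∉ N => hc.2 hγN), hthird]
          ring
        rw [hQγ]
      · have hcγ : 0 ≤ c γ := by
          by_contra hneg
          exact hγN (Finset.mem_filter.2 ⟨hBm, lt_of_not_ge (fun h => hneg (by linarith)), hγ0⟩)
        have hQγ : Q γ = c γ := by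
          rw [hQ]
          simp only [if_neg hnA, if_pos (⟨hBm, hγN⟩ : γ ∈ B ∧ γ ∉ N), hthird]
          ring
        rw [hQγ]; exact hcγ
  -- define the SAGE decomposition
  refine ⟨Q 0, ?_⟩
  set c0 : (Fin n → ℝ) → ℝ := fun γ => if γ = 0 then 0 else Q γ with hc0
  set g0 : (Fin n → ℝ) → ℝ :=
    fun x => (∑ γ ∈ T.erase 0, c0 γ * Real.exp (dotp γ x)) + c0 0 * Real.exp (dotp 0 x) with hg0
  set g : (Fin n → ℝ) → ((Fin n → ℝ) → ℝ) :=
    fun β => if β = 0 then g0 else if β ∈ N then gN β else 0 with hg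
  have h0T : (0 : Fin n → ℝ) ∈ T := Finset.mem_insert_self _ _
  have hNsub : N ⊆ T.erase 0 := fun β hβ =>
    Finset.mem_erase.2 ⟨(hNprop β hβ).2, hBT (hNB hβ)⟩
  have hg0eq : ∀ x, g0 x = ∑ γ ∈ T.erase 0, Q γ * Real.exp (dotp γ x) := by
    intro x
    rw [hg0]
    simp only [hc0, if_pos rfl, zero_mul, add_zero]
    refine Finset.sum_congr rfl fun γ hγ => ?_
    rw [if_neg (Finset.ne_of_mem_erase hγ)]
  have hg0f : ∀ x, g0 x = f x - Q 0 - ∑ β ∈ N, gN β x := by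
    intro x
    have hsplit : ∑ γ ∈ T, Q γ * Real.exp (dotp γ x)
        = Q 0 * Real.exp (dotp 0 x) + ∑ γ ∈ T.erase 0, Q γ * Real.exp (dotp γ x) :=
      (Finset.add_sum_erase T _ h0T).symm
    have hdz : dotp (0 : Fin n → ℝ) x = 0 := by
      unfold dotp; simp
    rw [hg0eq x]
    have k := key x
    rw [hsplit, hdz, Real.exp_zero, mul_one] at k
    linarith
  refine ⟨g, ?_, ?_⟩
  · -- each g β is AGE
    intro β hβT
    by_cases hβ0 : β = 0
    · subst hβ0
      have : g 0 = g0 := by rw [hg]; simp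
      rw [this]
      refine ⟨c0, ?_, fun x => rfl, ?_⟩
      · intro γ hγ
        rw [hc0]
        simp only [if_neg (Finset.ne_of_mem_erase hγ)]
        exact hQnn γ hγ
      · intro x
        rw [hg0]
        apply add_nonneg
        · apply Finset.sum_nonneg
          intro γ hγ
          apply mul_nonneg
          · rw [hc0]; simp only [if_neg (Finset.ne_of_mem_erase hγ)]
            exact hQnn γ hγ
          · exact (Real.exp_pos _).le
        · rw [hc0]; simp
    · by_cases hβN : β ∈ N
      · have hgβ : g β = gN β := by rw [hg]; simp [hβ0, hβN]
        rw [hgβ]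
        have hcβneg := (hNprop β hβN).1
        have hβS : β ∉ S := by
          intro hc
          rcases Finset.mem_insert.1 hc with h' | h'
          · exact hβ0 h'
          · exact Finset.disjoint_left.1 hdisj h' (hNB hβN)
        have hSsub : S ⊆ T.erase β := fun γ hγ =>
          Finset.mem_erase.2 ⟨fun hc => hβS (hc ▸ hγ), hST hγ⟩
        refine ⟨fun γ => if γ = β then c β else if γ ∈ S then (-c β) * d β γ else 0, ?_, ?_, ?_⟩
        · intro γ hγ
          show 0 ≤ if γ = β then c β else if γ ∈ S then (-c β) * d β γ else 0
          rw [if_neg (Finset.ne_of_mem_erase hγ)]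
          by_cases hγS : γ ∈ S
          · rw [if_pos hγS]
            exact mul_nonneg (by linarith) (hd1 β hβN γ hγS)
          · rw [if_neg hγS]
        · intro x
          have hsum : ∑ γ ∈ T.erase β,
              (if γ = β then c β else if γ ∈ S then (-c β) * d β γ else 0) * Real.exp (dotp γ x)
              = ∑ α ∈ S, ((-c β) * d β α) * Real.exp (dotp α x) := by
            rw [← Finset.sum_subset hSsub (fun γ hγ hγS => ?_)]
            · refine Finset.sum_congr rfl fun γ hγ => ?_
              rw [if_neg (fun hc : γ = β => hβS (hc ▸ hγ)), if_pos hγ]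
            · rw [if_neg (Finset.ne_of_mem_erase hγ), if_neg hγS, zero_mul]
          show gN β x = (∑ γ ∈ T.erase β,
              (if γ = β then c β else if γ ∈ S then (-c β) * d β γ else 0) * Real.exp (dotp γ x))
            + (if β = β then c β else if β ∈ S then (-c β) * d β β else 0) * Real.exp (dotp β x)
          rw [hsum, if_pos rfl]
        · intro x
          show 0 ≤ (∑ α ∈ S, ((-c β) * d β α) * Real.exp (dotp α x)) + c β * Real.exp (dotp β x)
          have hdom := hd3 β hβN x
          have h1 : ∑ α ∈ S, ((-c β) * d β α) * Real.exp (dotp α x)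
              = (-c β) * ∑ α ∈ S, d β α * Real.exp (dotp α x) := by
            rw [Finset.mul_sum]
            exact Finset.sum_congr rfl fun α _ => by ring
          rw [h1]
          nlinarith [Real.exp_pos (dotp β x)]
      · have hgβ : g β = 0 := by rw [hg]; simp [hβ0, hβN]
        rw [hgβ]
        exact ⟨0, fun _ _ => le_refl 0, fun x => by simp, fun x => le_refl 0⟩
  · -- the sum identity
    intro x
    have hsplit : ∑ β ∈ T, g β x = g 0 x + ∑ β ∈ T.erase 0, g β x :=
      (Finset.add_sum_erase T _ h0T).symm
    have hg00 : g 0 x = g0 x := by rw [hg]; simp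
    have hrest : ∑ β ∈ T.erase 0, g β x = ∑ β ∈ N, gN β x := by
      rw [← Finset.sum_subset hNsub (fun β hβ hβN => ?_)]
      · refine Finset.sum_congr rfl fun β hβ => ?_
        rw [hg]
        simp [(hNprop β hβ).2, hβ]
      · rw [hg]
        simp [Finset.ne_of_mem_erase hβ, hβN]
    rw [hsplit, hg00, hrest, hg0f x]
    ring
end

section
/- Let f(x) = Σ_{α∈T} c_α x^α be a polynomial with finite exponent set T ⊂ ℕ^n. Then f^SONC = (sig(f̃))^SAGE, and (sig(f̃))^SAGE ≤ min_{ω∈{−1,1}^n} (sig(f^ω))^SAGE ≤ f* = inf_{x∈ℝ^n} f(x). Moreover, if f is orthant-dominated, then (sig(f̃))^SAGE = min_{ω∈{−1,1}^n} (sig(f^ω))^SAGE. -/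
/-!
Write a SONC (resp. SAGE) certificate as a matrix `C β α`: row `β` holds the coefficients of the
AG (resp. AGE) term centred at `β`, so its off-diagonal entries are nonnegative and its column sums
are the coefficients of the certified function. In a SONC certificate the off-diagonal entries of
odd columns vanish. Evaluating an AG row at a suitable sign vector times `exp y` gives an AGE row
whose odd diagonal entry is `-|c|`; this turns a certificate of `f - λ` into one of `sig(f̃) - λ`.
Conversely, the odd columns of a SAGE certificate of `sig(f̃) - λ` have nonpositive sums, so adding
suitable multiples of row `γ` to the other rows clears the off-diagonal part of each odd column `γ`.
Afterwards each AGE row, read as a polynomial at `|x|` (nonnegative by continuity from the positive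
orthant), bounds from below the AG row obtained by restoring the odd diagonal entry `c`.
The other claims hold because the coefficients of `f^ω` dominate those of `f̃` and, for `ω` the
sign vector of `x`, `f(x) = sig(f^ω)(log |x|)` in the limit.
-/

open Finset

namespace SoncSage

section LinearCombination

variable {ι X : Type*}

def lincomb (s : Finset ι) (φ : ι → X → ℝ) : (ι → ℝ) →ₗ[ℝ] X → ℝ where
  toFun r x := ∑ α ∈ s, r α * φ α x
  map_add' r r' := by ext; simp [add_mul, sum_add_distrib]
  map_smul' a r := by ext; simp [mul_sum, mul_assoc]

theorem lincomb_apply (s : Finset ι) (φ : ι → X → ℝ) (r : ι → ℝ) (x : X) :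
    lincomb s φ r x = ∑ α ∈ s, r α * φ α x := rfl

theorem lincomb_congr {s : Finset ι} (φ : ι → X → ℝ) {r r' : ι → ℝ} (h : Set.EqOn r r' s) :
    lincomb s φ r = lincomb s φ r' := by
  ext x
  exact sum_congr rfl fun α hα => by rw [h hα]

theorem lincomb_eq_sum_smul (s : Finset ι) (φ : ι → X → ℝ) (r : ι → ℝ) :
    lincomb s φ r = ∑ α ∈ s, r α • φ α := by
  ext x
  simp [lincomb_apply]

theorem eqOn_of_lincomb_eq {s : Finset ι} {φ : ι → X → ℝ} (hφ : LinearIndependent ℝ φ)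
    {r r' : ι → ℝ} (h : lincomb s φ r = lincomb s φ r') : Set.EqOn r r' s := by
  intro α hα
  have hzero : ∑ α ∈ s, (r - r') α • φ α = 0 := by
    rw [← lincomb_eq_sum_smul, map_sub, h, sub_self]
  exact sub_eq_zero.mp (linearIndependent_iff'.mp hφ s _ hzero α hα)

theorem lincomb_insert_zero [Zero ι] [DecidableEq ι] (T : Finset ι) (φ : ι → X → ℝ)
    (hφ : ∀ x, φ 0 x = 1) (c : ι → ℝ) (l : ℝ) :
    lincomb (insert 0 T) φ (Set.indicator (↑T) c - Pi.single 0 l) =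
      fun x => lincomb T φ c x - l := by
  ext x
  simp only [lincomb_apply, Pi.sub_apply, sub_mul, sum_sub_distrib]
  congr 1
  · rw [← sum_subset (subset_insert 0 T) fun γ _ hγ => by simp [hγ]]
    exact sum_congr rfl fun γ hγ => by simp [hγ]
  · simp [Pi.single_apply, hφ]

theorem sum_lincomb_eq_iff {φ : ι → X → ℝ} (hφ : LinearIndependent ℝ φ) (s t : Finset ι)
    (C : ι → ι → ℝ) (w : ι → ℝ) :
    ∑ β ∈ t, lincomb s φ (C β) = lincomb s φ w ↔ ∀ α ∈ s, ∑ β ∈ t, C β α = w α := by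
  rw [← map_sum]
  refine ⟨fun h α hα => by simpa using eqOn_of_lincomb_eq hφ h hα, fun h => ?_⟩
  exact lincomb_congr φ fun α hα => by simpa using h α hα

def nonnegCone (s : Finset ι) (φ : ι → X → ℝ) : PointedCone ℝ (ι → ℝ) :=
  (PointedCone.positive ℝ (X → ℝ)).comap (lincomb s φ)

theorem mem_nonnegCone {s : Finset ι} {φ : ι → X → ℝ} {r : ι → ℝ} :
    r ∈ nonnegCone s φ ↔ ∀ x, 0 ≤ lincomb s φ r x := Iff.rfl

end LinearCombination

section RowDecomposition

variable {ι : Type*}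

structure IsRowDecomposition (K : PointedCone ℝ (ι → ℝ)) (s : Finset ι) (w : ι → ℝ)
    (C : ι → ι → ℝ) : Prop where
  offDiag_nonneg : ∀ β ∈ s, ∀ α ∈ s, α ≠ β → 0 ≤ C β α
  row_mem : ∀ β ∈ s, C β ∈ K
  sum_col : ∀ α ∈ s, ∑ β ∈ s, C β α = w α

def ColClean (s : Finset ι) (C : ι → ι → ℝ) (γ : ι) : Prop :=
  ∀ β ∈ s, β ≠ γ → C β γ = 0

theorem ColClean.sum_col {s : Finset ι} {C : ι → ι → ℝ} {γ : ι} (h : ColClean s C γ)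
    (hγ : γ ∈ s) : ∑ β ∈ s, C β γ = C γ γ :=
  sum_eq_single_of_mem γ hγ h

theorem IsRowDecomposition.target_mem_nonnegCone {X : Type*} {φ : ι → X → ℝ} {s : Finset ι}
    {w : ι → ℝ} {C : ι → ι → ℝ} (h : IsRowDecomposition (nonnegCone s φ) s w C) :
    w ∈ nonnegCone s φ := by
  have hsum : ∑ β ∈ s, C β ∈ nonnegCone s φ := sum_mem fun β hβ => h.row_mem β hβ
  refine mem_nonnegCone.mpr fun x => ?_
  rw [lincomb_congr φ fun α hα => (by simpa using (h.sum_col α hα).symm :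
    w α = (∑ β ∈ s, C β) α)]
  exact mem_nonnegCone.mp hsum x

variable [DecidableEq ι] {K : PointedCone ℝ (ι → ℝ)} {s : Finset ι} {w : ι → ℝ}
  {C : ι → ι → ℝ} {β γ : ι}

/-- Adds to each row `β ≠ γ` the multiple of row `γ` that cancels the entry `C β γ`, and scales
row `γ` so that column sums are unchanged. If `C γ γ = 0`, then `x / 0 = 0` makes this the
identity, which is right since a nonpositive column sum then forces the column to vanish. -/
noncomputable def sweep (s : Finset ι) (C : ι → ι → ℝ) (γ : ι) : ι → ι → ℝ := fun β =>
  if β = γ then (1 - ∑ β' ∈ s.erase γ, C β' γ / -C γ γ) • C γ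
  else C β + (C β γ / -C γ γ) • C γ

theorem sweep_self_apply (α : ι) :
    sweep s C γ γ α = (1 - ∑ β' ∈ s.erase γ, C β' γ / -C γ γ) * C γ α := by
  simp [sweep]

theorem sweep_apply_of_ne (hβγ : β ≠ γ) (α : ι) :
    sweep s C γ β α = C β α + C β γ / -C γ γ * C γ α := by
  simp [sweep, hβγ]

theorem ColClean.sweep {γ' : ι} (h : ColClean s C γ') (hγ : γ ∈ s) (hγ' : γ' ≠ γ) :
    ColClean s (SoncSage.sweep s C γ) γ' := by
  intro β hβ hβγ'
  rcases eq_or_ne β γ with rfl | hβγ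
  · rw [sweep_self_apply, h β hβ hβγ', mul_zero]
  · rw [sweep_apply_of_ne hβγ, h β hβ hβγ', h γ hγ hγ'.symm, mul_zero, add_zero]

namespace IsRowDecomposition

variable (h : IsRowDecomposition K s w C) (hγ : γ ∈ s) (hwγ : w γ ≤ 0)
include h hγ hwγ

theorem sum_offDiag_le : ∑ β ∈ s.erase γ, C β γ ≤ -C γ γ := by
  have := sum_erase_add s (fun β => C β γ) hγ
  rw [h.sum_col γ hγ] at this
  linarith

theorem offDiag_le (hβ : β ∈ s) (hβγ : β ≠ γ) : C β γ ≤ -C γ γ :=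
  (single_le_sum (fun β' hβ' => h.offDiag_nonneg β' (mem_of_mem_erase hβ') γ hγ
    (ne_of_mem_erase hβ').symm) (mem_erase.mpr ⟨hβγ, hβ⟩)).trans (h.sum_offDiag_le hγ hwγ)

theorem colClean_sweep : ColClean s (sweep s C γ) γ := by
  intro β hβ hβγ
  rw [sweep_apply_of_ne hβγ]
  rcases eq_or_ne (C γ γ) 0 with h0 | h0
  · have := h.offDiag_nonneg β hβ γ hγ hβγ.symm
    have := h.offDiag_le hγ hwγ hβ hβγ
    simp only [h0, neg_zero] at this ⊢
    linarith
  · field_simp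
    ring

theorem sweep : IsRowDecomposition K s w (sweep s C γ) := by
  have hoff : ∀ β ∈ s.erase γ, 0 ≤ C β γ := fun β hβ =>
    h.offDiag_nonneg β (mem_of_mem_erase hβ) γ hγ (ne_of_mem_erase hβ).symm
  have hd : 0 ≤ -C γ γ := (sum_nonneg hoff).trans (h.sum_offDiag_le hγ hwγ)
  have hcoef : ∀ β ∈ s.erase γ, 0 ≤ C β γ / -C γ γ := fun β hβ => div_nonneg (hoff β hβ) hd
  have hscale : 0 ≤ 1 - ∑ β ∈ s.erase γ, C β γ / -C γ γ := by
    rw [← sum_div, sub_nonneg]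
    exact div_le_one_of_le₀ (h.sum_offDiag_le hγ hwγ) hd
  refine ⟨fun β hβ α hα hαβ => ?_, fun β hβ => ?_, fun α hα => ?_⟩
  · rcases eq_or_ne β γ with rfl | hβγ
    · rw [sweep_self_apply]
      exact mul_nonneg hscale (h.offDiag_nonneg β hβ α hα hαβ)
    · rcases eq_or_ne α γ with rfl | hαγ
      · exact (h.colClean_sweep hγ hwγ β hβ hβγ).ge
      · rw [sweep_apply_of_ne hβγ]
        exact add_nonneg (h.offDiag_nonneg β hβ α hα hαβ)
          (mul_nonneg (hcoef β (mem_erase.mpr ⟨hβγ, hβ⟩)) (h.offDiag_nonneg γ hγ α hα hαγ))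
  · unfold SoncSage.sweep
    split_ifs with hβγ
    · exact K.smul_mem hscale (h.row_mem γ hγ)
    · exact K.add_mem (h.row_mem β hβ)
        (K.smul_mem (hcoef β (mem_erase.mpr ⟨hβγ, hβ⟩)) (h.row_mem γ hγ))
  · rw [← h.sum_col α hα, ← sum_erase_add s _ hγ, ← sum_erase_add s _ hγ, sweep_self_apply,
      sum_congr rfl fun β hβ => sweep_apply_of_ne (ne_of_mem_erase hβ) α, sum_add_distrib,
      ← sum_mul]
    ring

end IsRowDecomposition

theorem IsRowDecomposition.exists_colClean (h : IsRowDecomposition K s w C) (N : Finset ι)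
    (hN : ∀ γ ∈ N, γ ∈ s ∧ w γ ≤ 0) :
    ∃ C', IsRowDecomposition K s w C' ∧ ∀ γ ∈ N, ColClean s C' γ := by
  induction N using Finset.induction_on with
  | empty => exact ⟨C, h, by simp⟩
  | @insert γ N hγN ih =>
    obtain ⟨C', hC', hclean⟩ := ih fun γ' hγ' => hN γ' (mem_insert_of_mem hγ')
    obtain ⟨hγ, hwγ⟩ := hN γ (mem_insert_self γ N)
    refine ⟨_, hC'.sweep hγ hwγ, forall_mem_insert _ _ _ |>.mpr
      ⟨hC'.colClean_sweep hγ hwγ, fun γ' hγ' => (hclean γ' hγ').sweep hγ ?_⟩⟩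
    rintro rfl
    exact hγN hγ'

theorem IsRowDecomposition.add_single (h : IsRowDecomposition K s w C) (hβ : β ∈ s)
    {v : ι → ℝ} (hle : ∀ α ∈ s, w α ≤ v α) (hmem : v - w ∈ K) :
    IsRowDecomposition K s v (C + Pi.single β (v - w)) := by
  refine ⟨fun β' hβ' α hα hαβ' => ?_, fun β' hβ' => ?_, fun α hα => ?_⟩
  · rcases eq_or_ne β' β with rfl | hβ'β
    · simpa using add_nonneg (h.offDiag_nonneg β' hβ' α hα hαβ') (sub_nonneg.mpr (hle α hα))
    · simpa [hβ'β] using h.offDiag_nonneg β' hβ' α hα hαβ'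
  · rcases eq_or_ne β' β with rfl | hβ'β
    · simpa using K.add_mem (h.row_mem β' hβ') hmem
    · simpa [hβ'β] using h.row_mem β' hβ'
  · simp [sum_add_distrib, h.sum_col α hα, Pi.single_apply, apply_ite (fun f : ι → ℝ => f α), hβ]

end RowDecomposition

variable {n : ℕ}

section Monomials

noncomputable def expMonom (α : Fin n → ℕ) (y : Fin n → ℝ) : ℝ :=
  Real.exp (dotp (fun i => (α i : ℝ)) y)

theorem monom_zero (x : Fin n → ℝ) : monom 0 x = 1 := by simp [monom]

theorem expMonom_zero (y : Fin n → ℝ) : expMonom 0 y = 1 := by simp [expMonom, dotp]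

theorem monom_one (α : Fin n → ℕ) : monom α 1 = 1 := by simp [monom]

theorem monom_mul (α : Fin n → ℕ) (x y : Fin n → ℝ) : monom α (x * y) = monom α x * monom α y := by
  simp [monom, mul_pow, prod_mul_distrib]

theorem abs_monom (α : Fin n → ℕ) (x : Fin n → ℝ) : |monom α x| = monom α |x| := by
  simp [monom, abs_prod, abs_pow]

theorem monom_abs_of_even {α : Fin n → ℕ} (hα : ∀ i, Even (α i)) (x : Fin n → ℝ) :
    monom α |x| = monom α x :=
  prod_congr rfl fun i _ => (hα i).pow_abs (x i)

theorem monom_exp (α : Fin n → ℕ) (y : Fin n → ℝ) :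
    monom α (fun i => Real.exp (y i)) = expMonom α y := by
  simp [monom, expMonom, dotp, Real.exp_sum, ← Real.exp_nat_mul]

theorem lincomb_monom_exp (s : Finset (Fin n → ℕ)) (r : (Fin n → ℕ) → ℝ) (y : Fin n → ℝ) :
    lincomb s monom r (fun i => Real.exp (y i)) = lincomb s expMonom r y := by
  simp [lincomb_apply, monom_exp]

theorem lincomb_monom_mul (s : Finset (Fin n → ℕ)) (r : (Fin n → ℕ) → ℝ) (ε z : Fin n → ℝ) :
    lincomb s monom r (ε * z) = lincomb s monom (fun α => r α * monom α ε) z := by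
  simp only [lincomb_apply, monom_mul]
  exact sum_congr rfl fun α _ => by ring

theorem linearIndependent_expMonom : LinearIndependent ℝ (expMonom (n := n)) := by
  let χ : (Fin n → ℕ) → Multiplicative (Fin n → ℝ) →* ℝ := fun α =>
    { toFun := fun y => expMonom α y.toAdd
      map_one' := by simp [expMonom, dotp]
      map_mul' := fun y z => by
        simp [expMonom, dotp, mul_add, sum_add_distrib, Real.exp_add] }
  have hχ : Function.Injective χ := by
    intro α β h
    funext i
    simpa [χ, expMonom, dotp, Pi.single_apply] using
      DFunLike.congr_fun h (Multiplicative.ofAdd (Pi.single i 1))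
  exact (linearIndependent_monoidHom _ ℝ).comp χ hχ

theorem linearIndependent_monom : LinearIndependent ℝ (monom (n := n)) :=
  LinearIndependent.of_comp (LinearMap.funLeft ℝ ℝ fun (y : Fin n → ℝ) i => Real.exp (y i)) <| by
    convert linearIndependent_expMonom (n := n) using 1
    funext α y
    exact monom_exp α y

theorem lincomb_monom_nonneg {s : Finset (Fin n → ℕ)} {r : (Fin n → ℕ) → ℝ}
    (h : r ∈ nonnegCone s expMonom) {x : Fin n → ℝ} (hx : 0 ≤ x) : 0 ≤ lincomb s monom r x := by
  have hclosed : IsClosed {x | 0 ≤ lincomb s monom r x} :=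
    isClosed_le continuous_const <|
      show Continuous fun x : Fin n → ℝ => ∑ α ∈ s, r α * ∏ i, x i ^ α i by fun_prop
  have hpos : Set.univ.pi (fun _ => Set.Ioi 0) ⊆ {x | 0 ≤ lincomb s monom r x} := by
    intro x hx
    have hlog : x = fun i => Real.exp (Real.log (x i)) :=
      funext fun i => (Real.exp_log (hx i trivial)).symm
    rw [Set.mem_ofPred_eq, hlog, lincomb_monom_exp]
    exact mem_nonnegCone.mp h _
  refine hclosed.closure_subset_iff.mpr hpos ?_
  rw [closure_pi_set]
  exact fun i _ => by rw [closure_Ioi]; exact hx i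

end Monomials

section Signs

theorem abs_eq_one_of_sign {ε : Fin n → ℝ} (hε : ∀ i, ε i = 1 ∨ ε i = -1) : |ε| = 1 :=
  funext fun i => by rcases hε i with h | h <;> simp [h]

theorem abs_monom_of_sign {ε : Fin n → ℝ} (hε : ∀ i, ε i = 1 ∨ ε i = -1) (α : Fin n → ℕ) :
    |monom α ε| = 1 := by
  rw [abs_monom, abs_eq_one_of_sign hε, monom_one]

theorem monom_of_sign_of_even {ε : Fin n → ℝ} (hε : ∀ i, ε i = 1 ∨ ε i = -1) {α : Fin n → ℕ}
    (hα : ∀ i, Even (α i)) : monom α ε = 1 := by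
  rw [← monom_abs_of_even hα, abs_eq_one_of_sign hε, monom_one]

theorem exists_sign_monom_mul_eq_neg_abs {β : Fin n → ℕ} (hβ : ¬ ∀ i, Even (β i)) (r : ℝ) :
    ∃ ε : Fin n → ℝ, (∀ i, ε i = 1 ∨ ε i = -1) ∧ r * monom β ε = -|r| := by
  obtain ⟨i₀, hi₀⟩ := not_forall.mp hβ
  rcases le_or_gt 0 r with hr | hr
  · refine ⟨fun i => if i = i₀ then -1 else 1, fun i => by by_cases h : i = i₀ <;> simp [h], ?_⟩
    have hflip : monom β (fun i => if i = i₀ then -1 else 1) = -1 := by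
      simp [monom, ite_pow, (Nat.not_even_iff_odd.mp hi₀).neg_one_pow]
    rw [hflip, abs_of_nonneg hr, mul_neg_one]
  · exact ⟨1, fun _ => Or.inl rfl, by simp [monom, abs_of_neg hr]⟩

theorem exists_sign_mul_abs (x : Fin n → ℝ) :
    ∃ ω : Fin n → ℝ, (∀ i, ω i = 1 ∨ ω i = -1) ∧ ω * |x| = x := by
  refine ⟨fun i => if 0 ≤ x i then 1 else -1, fun i => by by_cases h : 0 ≤ x i <;> simp [h],
    funext fun i => ?_⟩
  by_cases h : 0 ≤ x i <;> simp [h, abs_of_neg (not_le.mp h)]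

end Signs

def tilde (c : (Fin n → ℕ) → ℝ) (α : Fin n → ℕ) : ℝ :=
  if ∀ i, Even (α i) then c α else -|c α|

theorem tilde_le_mul_monom_of_sign (c : (Fin n → ℕ) → ℝ) {ω : Fin n → ℝ}
    (hω : ∀ i, ω i = 1 ∨ ω i = -1) (α : Fin n → ℕ) : tilde c α ≤ c α * monom α ω := by
  unfold tilde
  split_ifs with hα
  · rw [monom_of_sign_of_even hω hα, mul_one]
  · calc -|c α| = -|c α * monom α ω| := by rw [abs_mul, abs_monom_of_sign hω, mul_one]
      _ ≤ c α * monom α ω := neg_abs_le _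

theorem tilde_nonpos_of_odd (c : (Fin n → ℕ) → ℝ) {α : Fin n → ℕ} (hα : ¬ ∀ i, Even (α i)) :
    tilde c α ≤ 0 := by
  simp [tilde, hα]

theorem tilde_indicator_sub_single (T : Finset (Fin n → ℕ)) (c : (Fin n → ℕ) → ℝ) (l : ℝ) :
    tilde (Set.indicator (↑T) c - Pi.single 0 l) =
      Set.indicator (↑T) (tilde c) - Pi.single 0 l := by
  funext γ
  by_cases hγ : ∀ i, Even (γ i)
  · by_cases hT : γ ∈ T <;> simp [tilde, hγ, hT]
  · have h0 : γ ≠ 0 := by rintro rfl; exact hγ fun _ => Even.zero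
    by_cases hT : γ ∈ T <;> simp [tilde, hγ, hT, h0]

section OddDiagonal

variable {s : Finset (Fin n → ℕ)} {C : (Fin n → ℕ) → (Fin n → ℕ) → ℝ} {v w : (Fin n → ℕ) → ℝ}
  {α β : Fin n → ℕ}

def OddClean (s : Finset (Fin n → ℕ)) (C : (Fin n → ℕ) → (Fin n → ℕ) → ℝ) : Prop :=
  ∀ γ ∈ s, (¬ ∀ i, Even (γ i)) → ColClean s C γ

def withOddDiag (C : (Fin n → ℕ) → (Fin n → ℕ) → ℝ) (v : (Fin n → ℕ) → ℝ) :
    (Fin n → ℕ) → (Fin n → ℕ) → ℝ :=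
  fun β α => if α = β ∧ ¬ ∀ i, Even (β i) then v β else C β α

theorem withOddDiag_of_ne (h : α ≠ β) : withOddDiag C v β α = C β α := by
  simp [withOddDiag, h]

theorem withOddDiag_of_even (h : ∀ i, Even (β i)) : withOddDiag C v β α = C β α := by
  simp [withOddDiag, h]

theorem withOddDiag_self_of_odd (h : ¬ ∀ i, Even (β i)) : withOddDiag C v β β = v β := by
  simp [withOddDiag, h]

theorem OddClean.withOddDiag (h : OddClean s C) : OddClean s (SoncSage.withOddDiag C v) :=
  fun γ hγ hodd β hβ hβγ => by rw [withOddDiag_of_ne hβγ.symm]; exact h γ hγ hodd β hβ hβγ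

theorem OddClean.diag_eq (h : OddClean s C) (hcol : ∀ α ∈ s, ∑ β ∈ s, C β α = w α) {γ}
    (hγ : γ ∈ s) (hodd : ¬ ∀ i, Even (γ i)) : C γ γ = w γ :=
  ((h γ hγ hodd).sum_col hγ).symm.trans (hcol γ hγ)

theorem OddClean.sum_col_withOddDiag (h : OddClean s C) {γ} (hγ : γ ∈ s) :
    ∑ β ∈ s, SoncSage.withOddDiag C v β γ = if ∀ i, Even (γ i) then ∑ β ∈ s, C β γ else v γ := by
  split_ifs with hev
  · refine sum_congr rfl fun β _ => ?_
    rcases eq_or_ne γ β with rfl | hγβ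
    exacts [withOddDiag_of_even hev, withOddDiag_of_ne hγβ]
  · rw [sum_eq_single_of_mem γ hγ fun β hβ hβγ => by
      rw [withOddDiag_of_ne hβγ.symm]; exact h γ hγ hev β hβ hβγ, withOddDiag_self_of_odd hev]

theorem exists_sign_withOddDiag_tilde (hw : ∀ α ∈ s, ∑ β ∈ s, C β α = w α) (hodd : OddClean s C)
    (hβ : β ∈ s) : ∃ ε : Fin n → ℝ, ∀ α ∈ s, withOddDiag C (tilde w) β α = C β α * monom α ε := by
  by_cases hβev : ∀ i, Even (β i)
  · exact ⟨1, fun α _ => by rw [withOddDiag_of_even hβev, monom_one, mul_one]⟩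
  obtain ⟨ε, hε, hεβ⟩ := exists_sign_monom_mul_eq_neg_abs hβev (w β)
  refine ⟨ε, fun α hα => ?_⟩
  rcases eq_or_ne α β with rfl | hαβ
  · rw [withOddDiag_self_of_odd hβev, hodd.diag_eq hw hα hβev, hεβ, tilde, if_neg hβev]
  · rw [withOddDiag_of_ne hαβ]
    by_cases hαev : ∀ i, Even (α i)
    · rw [monom_of_sign_of_even hε hαev, mul_one]
    · rw [hodd α hα hαev β hβ hαβ.symm, zero_mul]

theorem IsRowDecomposition.withOddDiag_tilde
    (h : IsRowDecomposition (nonnegCone s monom) s w C) (hodd : OddClean s C) :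
    IsRowDecomposition (nonnegCone s expMonom) s (tilde w) (withOddDiag C (tilde w)) := by
  refine ⟨fun β hβ α hα hαβ => ?_, fun β hβ => ?_, fun γ hγ => ?_⟩
  · rw [withOddDiag_of_ne hαβ]
    exact h.offDiag_nonneg β hβ α hα hαβ
  · obtain ⟨ε, hε⟩ := exists_sign_withOddDiag_tilde h.sum_col hodd hβ
    refine mem_nonnegCone.mpr fun y => ?_
    rw [lincomb_congr _ hε, ← lincomb_monom_exp, ← lincomb_monom_mul]
    exact mem_nonnegCone.mp (h.row_mem β hβ) _
  · rw [hodd.sum_col_withOddDiag hγ, h.sum_col γ hγ, tilde]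
    split_ifs <;> rfl

theorem withOddDiag_term_le (hC : ¬ (∀ i, Even (β i)) → C β β = tilde w β)
    (hodd : ¬ (∀ i, Even (α i)) → α ≠ β → C β α = 0) (x : Fin n → ℝ) : C β α * monom α |x| ≤ withOddDiag C w β α * monom α x := by
  by_cases hαev : ∀ i, Even (α i)
  · rcases eq_or_ne α β with rfl | hαβ
    · rw [withOddDiag_of_even hαev, monom_abs_of_even hαev]
    · rw [withOddDiag_of_ne hαβ, monom_abs_of_even hαev]
  rcases eq_or_ne α β with rfl | hαβ
  · rw [withOddDiag_self_of_odd hαev, hC hαev, tilde, if_neg hαev, ← abs_monom, neg_mul,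
      ← abs_mul]
    exact neg_abs_le _
  · rw [withOddDiag_of_ne hαβ, hodd hαev hαβ, zero_mul, zero_mul]

theorem IsRowDecomposition.withOddDiag_of_tilde
    (h : IsRowDecomposition (nonnegCone s expMonom) s (tilde w) C) (hodd : OddClean s C) :
    IsRowDecomposition (nonnegCone s monom) s w (withOddDiag C w) := by
  refine ⟨fun β hβ α hα hαβ => ?_, fun β hβ => ?_, fun γ hγ => ?_⟩
  · rw [withOddDiag_of_ne hαβ]
    exact h.offDiag_nonneg β hβ α hα hαβ
  · refine mem_nonnegCone.mpr fun x =>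
      (lincomb_monom_nonneg (h.row_mem β hβ) (abs_nonneg x)).trans ?_
    exact sum_le_sum fun α hα => withOddDiag_term_le (hodd.diag_eq h.sum_col hβ)
      (fun hαodd hαβ => hodd α hα hαodd β hβ hαβ.symm) x
  · rw [hodd.sum_col_withOddDiag hγ, h.sum_col γ hγ, tilde]
    split_ifs <;> rfl

end OddDiagonal

section Certificates

def castExp (α : Fin n → ℕ) : Fin n → ℝ := fun i => (α i : ℝ)

theorem castExp_injective : Function.Injective (castExp (n := n)) :=
  Nat.cast_injective.comp_left

theorem invFun_castExp (α : Fin n → ℕ) : Function.invFun castExp (castExp α) = α :=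
  Function.leftInverse_invFun castExp_injective α

theorem image_castExp_insert_zero (T : Finset (Fin n → ℕ)) :
    insert 0 (T.image castExp) = (insert 0 T).image castExp := by
  rw [image_insert]
  congr
  funext i
  simp [castExp]

theorem sum_image_castExp_erase_add (s : Finset (Fin n → ℕ)) (g : (Fin n → ℝ) → ℝ)
    {β : Fin n → ℕ} (hβ : β ∈ s) :
    ∑ a ∈ (s.image castExp).erase (castExp β), g a + g (castExp β) = ∑ α ∈ s, g (castExp α) := by
  rw [sum_erase_add _ _ (mem_image_of_mem _ hβ), sum_image castExp_injective.injOn]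

theorem isAGE_image_castExp_iff {s : Finset (Fin n → ℕ)} {β : Fin n → ℕ} (hβ : β ∈ s)
    {F : (Fin n → ℝ) → ℝ} :
    IsAGE ((s.image castExp).erase (castExp β)) (castExp β) F ↔
      ∃ r, (∀ α ∈ s, α ≠ β → 0 ≤ r α) ∧ r ∈ nonnegCone s expMonom ∧
        F = lincomb s expMonom r := by
  constructor
  · rintro ⟨c, hc, hF, hF0⟩
    have hFr : F = lincomb s expMonom (c ∘ castExp) := funext fun y => by
      rw [hF, sum_image_castExp_erase_add s (fun a => c a * Real.exp (dotp a y)) hβ]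
      rfl
    refine ⟨c ∘ castExp, fun α hα hαβ => hc _ ?_, mem_nonnegCone.mpr (hFr ▸ hF0), hFr⟩
    exact mem_erase.mpr ⟨castExp_injective.ne hαβ, mem_image_of_mem _ hα⟩
  · rintro ⟨r, hr, hr0, rfl⟩
    refine ⟨r ∘ Function.invFun castExp, fun a ha => ?_, fun y => ?_, mem_nonnegCone.mp hr0⟩
    · obtain ⟨hne, ha⟩ := mem_erase.mp ha
      obtain ⟨α, hα, rfl⟩ := mem_image.mp ha
      rw [Function.comp_apply, invFun_castExp α]
      exact hr α hα (by rintro rfl; exact hne rfl)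
    · rw [sum_image_castExp_erase_add s (fun a => (r ∘ Function.invFun castExp) a *
        Real.exp (dotp a y)) hβ]
      simp only [Function.comp_apply, invFun_castExp]
      rfl

theorem isSAGE_image_castExp_iff {s : Finset (Fin n → ℕ)} {w : (Fin n → ℕ) → ℝ} :
    IsSAGE (s.image castExp) (lincomb s expMonom w) ↔
      ∃ C, IsRowDecomposition (nonnegCone s expMonom) s w C := by
  constructor
  · rintro ⟨g, hg, hsum⟩
    have hrow : ∀ β, ∃ r, β ∈ s → (∀ α ∈ s, α ≠ β → 0 ≤ r α) ∧ r ∈ nonnegCone s expMonom ∧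
        g (castExp β) = lincomb s expMonom r := fun β => by
      by_cases hβ : β ∈ s
      · obtain ⟨r, hr⟩ := (isAGE_image_castExp_iff hβ).mp (hg _ (mem_image_of_mem _ hβ))
        exact ⟨r, fun _ => hr⟩
      · exact ⟨0, fun h => absurd h hβ⟩
    choose C hC using hrow
    refine ⟨C, fun β hβ => (hC β hβ).1, fun β hβ => (hC β hβ).2.1, ?_⟩
    refine (sum_lincomb_eq_iff linearIndependent_expMonom s s C w).mp (funext fun y => ?_)
    rw [Finset.sum_apply, hsum y, sum_image castExp_injective.injOn]
    exact sum_congr rfl fun β hβ => by rw [(hC β hβ).2.2]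
  · rintro ⟨C, hC⟩
    refine ⟨fun b => lincomb s expMonom (C (Function.invFun castExp b)), fun b hb => ?_,
      fun y => ?_⟩
    · obtain ⟨β, hβ, rfl⟩ := mem_image.mp hb
      simp only [invFun_castExp]
      exact (isAGE_image_castExp_iff hβ).mpr ⟨C β, hC.offDiag_nonneg β hβ, hC.row_mem β hβ, rfl⟩
    · rw [sum_image castExp_injective.injOn]
      simp only [invFun_castExp]
      rw [← Finset.sum_apply,
        (sum_lincomb_eq_iff linearIndependent_expMonom s s C w).mpr hC.sum_col]

theorem isAG_erase_iff {s : Finset (Fin n → ℕ)} {β : Fin n → ℕ} (hβ : β ∈ s)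
    {F : (Fin n → ℝ) → ℝ} :
    IsAG (s.erase β) β F ↔
      ∃ r, (∀ α ∈ s, α ≠ β → 0 ≤ r α) ∧ (∀ α ∈ s, α ≠ β → (¬ ∀ i, Even (α i)) → r α = 0) ∧
        r ∈ nonnegCone s monom ∧ F = lincomb s monom r := by
  constructor
  · rintro ⟨c, hc, hodd, hF, hF0⟩
    have hFr : F = lincomb s monom c := funext fun x => by rw [hF, sum_erase_add _ _ hβ]; rfl
    exact ⟨c, fun α hα hαβ => hc α (mem_erase.mpr ⟨hαβ, hα⟩),
      fun α hα hαβ => hodd α (mem_erase.mpr ⟨hαβ, hα⟩), mem_nonnegCone.mpr (hFr ▸ hF0), hFr⟩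
  · rintro ⟨r, hr, hodd, hr0, rfl⟩
    exact ⟨r, fun α hα => hr α (mem_of_mem_erase hα) (ne_of_mem_erase hα),
      fun α hα => hodd α (mem_of_mem_erase hα) (ne_of_mem_erase hα),
      fun x => (sum_erase_add _ _ hβ).symm, mem_nonnegCone.mp hr0⟩

theorem isSONC_iff {s : Finset (Fin n → ℕ)} {w : (Fin n → ℕ) → ℝ} :
    IsSONC s (lincomb s monom w) ↔
      ∃ C, IsRowDecomposition (nonnegCone s monom) s w C ∧ OddClean s C := by
  constructor
  · rintro ⟨g, hg, hsum⟩
    have hrow : ∀ β, ∃ r, β ∈ s → (∀ α ∈ s, α ≠ β → 0 ≤ r α) ∧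
        (∀ α ∈ s, α ≠ β → (¬ ∀ i, Even (α i)) → r α = 0) ∧ r ∈ nonnegCone s monom ∧
        g β = lincomb s monom r := fun β => by
      by_cases hβ : β ∈ s
      · obtain ⟨r, hr⟩ := (isAG_erase_iff hβ).mp (hg β hβ)
        exact ⟨r, fun _ => hr⟩
      · exact ⟨0, fun h => absurd h hβ⟩
    choose C hC using hrow
    refine ⟨C, ⟨fun β hβ => (hC β hβ).1, fun β hβ => (hC β hβ).2.2.1, ?_⟩,
      fun γ hγ hodd β hβ hβγ => (hC β hβ).2.1 γ hγ hβγ.symm hodd⟩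
    refine (sum_lincomb_eq_iff linearIndependent_monom s s C w).mp (funext fun x => ?_)
    rw [Finset.sum_apply, hsum x]
    exact sum_congr rfl fun β hβ => by rw [(hC β hβ).2.2.2]
  · rintro ⟨C, hC, hodd⟩
    refine ⟨fun β => lincomb s monom (C β), fun β hβ => (isAG_erase_iff hβ).mpr
      ⟨C β, hC.offDiag_nonneg β hβ, fun α hα hαβ hαodd => hodd α hα hαodd β hβ hαβ.symm,
        hC.row_mem β hβ, rfl⟩, fun x => ?_⟩
    rw [← Finset.sum_apply, (sum_lincomb_eq_iff linearIndependent_monom s s C w).mpr hC.sum_col]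

theorem isSONC_iff_isSAGE_tilde (s : Finset (Fin n → ℕ)) (w : (Fin n → ℕ) → ℝ) :
    IsSONC s (lincomb s monom w) ↔ IsSAGE (s.image castExp) (lincomb s expMonom (tilde w)) := by
  rw [isSONC_iff, isSAGE_image_castExp_iff]
  constructor
  · rintro ⟨C, hC, hodd⟩
    exact ⟨_, hC.withOddDiag_tilde hodd⟩
  · rintro ⟨C, hC⟩
    obtain ⟨C', hC', hclean⟩ := hC.exists_colClean (s.filter fun γ => ¬ ∀ i, Even (γ i))
      fun γ hγ => ⟨(mem_filter.mp hγ).1, tilde_nonpos_of_odd w (mem_filter.mp hγ).2⟩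
    have hodd : OddClean s C' := fun γ hγ hγodd => hclean γ (mem_filter.mpr ⟨hγ, hγodd⟩)
    exact ⟨_, hC'.withOddDiag_of_tilde hodd, hodd.withOddDiag⟩

theorem isSAGE_image_castExp_mono {s : Finset (Fin n → ℕ)} {u v : (Fin n → ℕ) → ℝ}
    (h : IsSAGE (s.image castExp) (lincomb s expMonom u)) {β : Fin n → ℕ} (hβ : β ∈ s)
    (hle : ∀ α ∈ s, u α ≤ v α) : IsSAGE (s.image castExp) (lincomb s expMonom v) := by
  rw [isSAGE_image_castExp_iff] at h ⊢
  obtain ⟨C, hC⟩ := h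
  refine ⟨_, hC.add_single hβ hle (mem_nonnegCone.mpr fun y => sum_nonneg fun α hα => ?_)⟩
  exact mul_nonneg (sub_nonneg.mpr (hle α hα)) (Real.exp_pos _).le

end Certificates

theorem soncBound_eq_sageBound_tilde (T : Finset (Fin n → ℕ)) (c : (Fin n → ℕ) → ℝ) :
    soncBound T (lincomb T monom c) =
      sageBound (T.image castExp) (lincomb T expMonom (tilde c)) := by
  unfold soncBound sageBound
  congr 2
  ext l
  change IsSONC _ (fun x => lincomb T monom c x - l) ↔
    IsSAGE _ (fun y => lincomb T expMonom (tilde c) y - l)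
  rw [← lincomb_insert_zero T monom monom_zero, ← lincomb_insert_zero T expMonom expMonom_zero,
    ← tilde_indicator_sub_single, image_castExp_insert_zero]
  exact isSONC_iff_isSAGE_tilde _ _

theorem sageBound_tilde_le (T : Finset (Fin n → ℕ)) (c : (Fin n → ℕ) → ℝ) {ω : Fin n → ℝ}
    (hω : ∀ i, ω i = 1 ∨ ω i = -1) :
    sageBound (T.image castExp) (lincomb T expMonom (tilde c)) ≤
      sageBound (T.image castExp) (lincomb T expMonom fun α => c α * monom α ω) := by
  refine sSup_le_sSup (Set.image_mono fun l hl => ?_)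
  change IsSAGE _ (fun y => _ - l) at hl ⊢
  rw [← lincomb_insert_zero T expMonom expMonom_zero, image_castExp_insert_zero] at hl ⊢
  exact isSAGE_image_castExp_mono hl (mem_insert_self 0 T) fun α _ =>
    sub_le_sub_right (Set.indicator_le_indicator (tilde_le_mul_monom_of_sign c hω α)) _

theorem exists_sign_sageBound_le (T : Finset (Fin n → ℕ)) (c : (Fin n → ℕ) → ℝ)
    (x : Fin n → ℝ) : ∃ ω : Fin n → ℝ, (∀ i, ω i = 1 ∨ ω i = -1) ∧
      sageBound (T.image castExp) (lincomb T expMonom fun α => c α * monom α ω) ≤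
        lincomb T monom c x := by
  obtain ⟨ω, hω, hωx⟩ := exists_sign_mul_abs x
  refine ⟨ω, hω, sSup_le ?_⟩
  rintro _ ⟨l, hl, rfl⟩
  change IsSAGE _ (fun y => _ - l) at hl
  rw [← lincomb_insert_zero T expMonom expMonom_zero, image_castExp_insert_zero,
    isSAGE_image_castExp_iff] at hl
  obtain ⟨C, hC⟩ := hl
  have hnonneg := lincomb_monom_nonneg hC.target_mem_nonnegCone (abs_nonneg x)
  rw [lincomb_insert_zero T monom monom_zero] at hnonneg
  dsimp only at hnonneg
  rw [← lincomb_monom_mul, hωx] at hnonneg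
  exact EReal.coe_le_coe_iff.mpr (sub_nonneg.mp hnonneg)

end SoncSage

open SoncSage

/-- Relations between SONC and SAGE bounds: `f^SONC = (sig f̃)^SAGE ≤ min_ω (sig f^ω)^SAGE ≤ f*`,
with equality of the first inequality when `f` is orthant-dominated. -/
theorem stmt3 {n : ℕ} (T : Finset (Fin n → ℕ)) (c : (Fin n → ℕ) → ℝ)
    (f : (Fin n → ℝ) → ℝ) (hf : ∀ x, f x = ∑ α ∈ T, c α * monom α x)
    -- coefficients of f̃
    (ct : (Fin n → ℕ) → ℝ)
    (hct : ∀ α, ct α = if (∀ i, Even (α i)) then c α else -|c α|)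
    -- the support of the associated signomials
    (Tr : Finset (Fin n → ℝ)) (hTr : Tr = T.image (fun α i => (α i : ℝ)))
    -- the signomial sig(f̃)
    (sigt : (Fin n → ℝ) → ℝ)
    (hsigt : ∀ y, sigt y = ∑ α ∈ T, ct α * Real.exp (dotp (fun i => (α i : ℝ)) y))
    -- the signomials sig(f^ω)
    (sigf : (Fin n → ℝ) → (Fin n → ℝ) → ℝ)
    (hsigf : ∀ ω y, sigf ω y
      = ∑ α ∈ T, (c α * ∏ i, ω i ^ (α i)) * Real.exp (dotp (fun i => (α i : ℝ)) y)) :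
    (soncBound T f = sageBound Tr sigt) ∧
    (sageBound Tr sigt
      ≤ ⨅ ω : {ω : Fin n → ℝ // ∀ i, ω i = 1 ∨ ω i = -1}, sageBound Tr (sigf ω)) ∧
    ((⨅ ω : {ω : Fin n → ℝ // ∀ i, ω i = 1 ∨ ω i = -1}, sageBound Tr (sigf ω)) ≤ infStar f) ∧
    -- if f is orthant-dominated (f^ω = f̃ for some sign vector ω), the first bound is the min
    ((∃ ω : Fin n → ℝ, (∀ i, ω i = 1 ∨ ω i = -1) ∧ ∀ α ∈ T, c α * ∏ i, ω i ^ (α i) = ct α) →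
      sageBound Tr sigt
        = ⨅ ω : {ω : Fin n → ℝ // ∀ i, ω i = 1 ∨ ω i = -1}, sageBound Tr (sigf ω)) := by
  obtain rfl : f = lincomb T monom c := funext hf
  obtain rfl : ct = tilde c := funext hct
  obtain rfl : sigt = lincomb T expMonom (tilde c) := funext hsigt
  obtain rfl : sigf = fun ω => lincomb T expMonom fun α => c α * monom α ω :=
    funext fun ω => funext (hsigf ω)
  subst hTr
  have hmono := fun ω : {ω : Fin n → ℝ // ∀ i, ω i = 1 ∨ ω i = -1} => sageBound_tilde_le T c ω.2
  refine ⟨soncBound_eq_sageBound_tilde T c, le_iInf hmono, le_iInf fun x => ?_, ?_⟩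
  · obtain ⟨ω, hω, hle⟩ := exists_sign_sageBound_le T c x
    exact iInf_le_of_le ⟨ω, hω⟩ hle
  · rintro ⟨ω, hω, hdom⟩
    refine le_antisymm (le_iInf hmono) (iInf_le_of_le ⟨ω, hω⟩ ?_)
    exact (congrArg _ (lincomb_congr (r := fun α => c α * monom α ω) expMonom hdom)).le
end

section
/- Let n ≥ 2 and let f be a non-constant SAGE signomial in n variables that is invariant under the action of S_n by permutation of coordinates. If the real zero set V(f) = {x ∈ ℝ^n : f(x) = 0} is non-empty, then exactly one of the following holds: (1) V(f) is a singleton {(t,…,t)} on the diagonal; (2) V(f) equals the diagonal {(t,…,t) : t ∈ ℝ}; (3) V(f) is an affine hyperplane of the form {x ∈ ℝ^n : Σ_{i=1}^n x_i = τ} for some τ ∈ ℝ. In particular, if a symmetric SAGE signomial has a zero, then it has a zero on the diagonal. -/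
open Finset

/-!
A SAGE signomial is a sum of nonnegative AGE signomials, so it vanishes exactly where all of
its AGE summands do. After dividing by its positive `β`-term, an AGE summand becomes a
nonnegative combination of exponentials of linear forms plus a constant; strict convexity of
`exp` forces the linear forms with nonzero coefficient to be constant on the zero set, which is
therefore an affine subspace `x₀ + W`. Symmetry of `f` makes `W` invariant under `Sₙ`, and the
only `Sₙ`-invariant subspaces of `ℝⁿ` are `0`, the diagonal, the sum-zero hyperplane and `ℝⁿ`;
the last is excluded since `f` is not constant.
-/

open Real

section ExpSum

variable {E ι : Type*} [AddCommGroup E] [Module ℝ E] {s : Finset ι} {c : ι → ℝ}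
  {ℓ : ι → E →ₗ[ℝ] ℝ} {d : ℝ}

theorem eq_of_sum_mul_exp_add_eq_zero (hc : ∀ i ∈ s, 0 ≤ c i)
    (hnonneg : ∀ z, 0 ≤ ∑ i ∈ s, c i * exp (ℓ i z) + d) {x y : E}
    (hx : ∑ i ∈ s, c i * exp (ℓ i x) + d = 0) (hy : ∑ i ∈ s, c i * exp (ℓ i y) + d = 0)
    {j : ι} (hj : j ∈ s) (hcj : c j ≠ 0) : ℓ j y = ℓ j x := by
  by_contra hne
  set m : E := (1 / 2 : ℝ) • x + (1 / 2 : ℝ) • y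
  have hm : ∀ i, ℓ i m = (1 / 2 : ℝ) • ℓ i x + (1 / 2 : ℝ) • ℓ i y := fun i => by simp [m]
  have hle : ∀ i ∈ s, c i * exp (ℓ i m) ≤ c i * (1 / 2 * exp (ℓ i x) + 1 / 2 * exp (ℓ i y)) :=
    fun i hi => by
      rw [hm]
      exact mul_le_mul_of_nonneg_left (convexOn_exp.2 (Set.mem_univ _) (Set.mem_univ _)
        (by norm_num) (by norm_num) (by norm_num)) (hc i hi)
  have hlt : c j * exp (ℓ j m) < c j * (1 / 2 * exp (ℓ j x) + 1 / 2 * exp (ℓ j y)) := by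
    rw [hm]
    exact mul_lt_mul_of_pos_left (strictConvexOn_exp.2 (Set.mem_univ _) (Set.mem_univ _)
      (Ne.symm hne) (by norm_num) (by norm_num) (by norm_num)) ((hc j hj).lt_of_ne' hcj)
  have hsum := Finset.sum_lt_sum hle ⟨j, hj, hlt⟩
  simp only [mul_add, Finset.sum_add_distrib, mul_left_comm _ (1 / 2 : ℝ), ← Finset.mul_sum]
    at hsum
  linarith [hnonneg m]

theorem exists_submodule_sum_mul_exp_add_eq_zero_iff (hc : ∀ i ∈ s, 0 ≤ c i)
    (hnonneg : ∀ z, 0 ≤ ∑ i ∈ s, c i * exp (ℓ i z) + d) {x : E}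
    (hx : ∑ i ∈ s, c i * exp (ℓ i x) + d = 0) :
    ∃ W : Submodule ℝ E, ∀ y, ∑ i ∈ s, c i * exp (ℓ i y) + d = 0 ↔ y - x ∈ W := by
  refine ⟨⨅ i ∈ s, ⨅ (_ : c i ≠ 0), LinearMap.ker (ℓ i), fun y => ?_⟩
  simp only [Submodule.mem_iInf, LinearMap.mem_ker, map_sub, sub_eq_zero]
  refine ⟨fun hy i hi hci => eq_of_sum_mul_exp_add_eq_zero hc hnonneg hx hy hi hci,
    fun hyx => hx ▸ ?_⟩
  congr 1
  refine Finset.sum_congr rfl fun i hi => ?_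
  rcases eq_or_ne (c i) 0 with hci | hci
  · simp [hci]
  · rw [hyx i hi hci]

end ExpSum

section SAGE

variable {n : ℕ}

theorem dotp_eq_dotProduct (a x : Fin n → ℝ) : dotp a x = a ⬝ᵥ x := rfl

theorem IsAGE.nonneg {A : Finset (Fin n → ℝ)} {β : Fin n → ℝ} {g : (Fin n → ℝ) → ℝ}
    (h : IsAGE A β g) (x : Fin n → ℝ) : 0 ≤ g x := by
  obtain ⟨_, _, _, hg⟩ := h
  exact hg x

theorem IsAGE.exists_submodule_zero_iff {A : Finset (Fin n → ℝ)} {β : Fin n → ℝ}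
    {g : (Fin n → ℝ) → ℝ} (h : IsAGE A β g) {x : Fin n → ℝ} (hx : g x = 0) :
    ∃ W : Submodule ℝ (Fin n → ℝ), ∀ y, g y = 0 ↔ y - x ∈ W := by
  obtain ⟨c, hc, hg, hnonneg⟩ := h
  set F : (Fin n → ℝ) → ℝ :=
    fun z => ∑ α ∈ A, c α * exp (dotProductBilin ℝ ℝ (α - β) z) + c β
  have hgF : ∀ z, g z = exp (β ⬝ᵥ z) * F z := fun z => by
    rw [hg z, mul_add, Finset.mul_sum, mul_comm (exp _)]
    congr 1
    refine Finset.sum_congr rfl fun α _ => ?_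
    rw [dotProductBilin_apply_apply, sub_dotProduct, exp_sub, mul_left_comm,
      mul_div_cancel₀ _ (exp_ne_zero _), dotp_eq_dotProduct]
  have hzero : ∀ z, g z = 0 ↔ F z = 0 := fun z => by
    rw [hgF, mul_eq_zero, or_iff_right (exp_ne_zero _)]
  have hF : ∀ z, 0 ≤ F z := fun z =>
    (mul_nonneg_iff_of_pos_left (exp_pos _)).1 (hgF z ▸ hnonneg z)
  obtain ⟨W, hW⟩ := exists_submodule_sum_mul_exp_add_eq_zero_iff hc hF ((hzero x).1 hx)
  exact ⟨W, fun y => (hzero y).trans (hW y)⟩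

theorem IsSAGE.exists_submodule_zero_iff {T : Finset (Fin n → ℝ)} {f : (Fin n → ℝ) → ℝ}
    (h : IsSAGE T f) {x : Fin n → ℝ} (hx : f x = 0) :
    ∃ W : Submodule ℝ (Fin n → ℝ), ∀ y, f y = 0 ↔ y - x ∈ W := by
  obtain ⟨g, hg, hf⟩ := h
  have hzero : ∀ y, f y = 0 ↔ ∀ β ∈ T, g β y = 0 := fun y => by
    rw [hf]
    exact Finset.sum_eq_zero_iff_of_nonneg fun β hβ => (hg β hβ).nonneg y
  choose W hW using fun β (hβ : β ∈ T) =>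
    (hg β hβ).exists_submodule_zero_iff ((hzero x).1 hx β hβ)
  refine ⟨⨅ β, ⨅ hβ : β ∈ T, W β hβ, fun y => ?_⟩
  simp only [hzero, Submodule.mem_iInf]
  exact forall₂_congr fun β hβ => hW β hβ y

end SAGE

theorem apply_sub_mem_and_apply_mem_of_zero_iff {R E M : Type*} [Ring R] [AddCommGroup E]
    [Module R E] [Zero M] {f : E → M} {W : Submodule R E} {x₀ : E}
    (hW : ∀ y, f y = 0 ↔ y - x₀ ∈ W) {L : E →ₗ[R] E} (hL : ∀ y, f (L y) = f y) :
    L x₀ - x₀ ∈ W ∧ ∀ u ∈ W, L u ∈ W := by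
  have hZ : ∀ y, y - x₀ ∈ W → L y - x₀ ∈ W := fun y hy => (hW _).1 ((hL y).trans ((hW y).2 hy))
  have h₀ : L x₀ - x₀ ∈ W := hZ x₀ (by simp)
  refine ⟨h₀, fun u hu => ?_⟩
  simpa using W.sub_mem (hZ (x₀ + u) (by simpa using hu)) h₀

theorem Equiv.Perm.exists_apply_eq_apply_eq {α : Type*} [DecidableEq α] {i j k l : α}
    (hij : i ≠ j) (hkl : k ≠ l) : ∃ σ : Equiv.Perm α, σ i = k ∧ σ j = l := by
  have hk : k ≠ Equiv.swap i k j := by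
    rw [ne_eq, eq_comm, Equiv.swap_apply_eq_iff, Equiv.swap_apply_right]
    exact hij.symm
  exact ⟨Equiv.swap (Equiv.swap i k j) l * Equiv.swap i k, by
    simp [Equiv.swap_apply_of_ne_of_ne hk hkl], by simp⟩

section Symmetric

variable {n : ℕ}

def diagonal (n : ℕ) : Submodule ℝ (Fin n → ℝ) := ℝ ∙ 1

def sumZero (n : ℕ) : Submodule ℝ (Fin n → ℝ) := LinearMap.ker (∑ i, LinearMap.proj i)

theorem mem_diagonal_iff {x : Fin n → ℝ} : x ∈ diagonal n ↔ ∃ t : ℝ, x = fun _ => t := by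
  simp only [diagonal, Submodule.mem_span_singleton, funext_iff, Pi.smul_apply, Pi.one_apply,
    smul_eq_mul, mul_one, eq_comm]

theorem mem_diagonal_iff_forall_eq {x : Fin n → ℝ} : x ∈ diagonal n ↔ ∀ i j, x i = x j := by
  rw [mem_diagonal_iff]
  refine ⟨by rintro ⟨t, rfl⟩ i j; rfl, fun h => ?_⟩
  rcases isEmpty_or_nonempty (Fin n) with _ | ⟨⟨i⟩⟩
  · exact ⟨0, Subsingleton.elim _ _⟩
  · exact ⟨x i, funext fun j => h j i⟩

theorem mem_sumZero {x : Fin n → ℝ} : x ∈ sumZero n ↔ ∑ i, x i = 0 := by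
  simp [sumZero]

theorem isAtom_diagonal (hn : n ≠ 0) : IsAtom (diagonal n) :=
  haveI : NeZero n := ⟨hn⟩
  nonzero_span_atom _ one_ne_zero

theorem isCoatom_sumZero (hn : n ≠ 0) : IsCoatom (sumZero n) :=
  LinearMap.isCoatom_ker_of_surjective fun t => ⟨Pi.single ⟨0, Nat.pos_of_ne_zero hn⟩ t, by simp⟩

theorem permAct_sub (σ : Equiv.Perm (Fin n)) (x y : Fin n → ℝ) :
    permAct σ (x - y) = permAct σ x - permAct σ y := rfl

theorem permAct_single (σ : Equiv.Perm (Fin n)) (i : Fin n) (a : ℝ) :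
    permAct σ (Pi.single i a) = Pi.single (σ i) a :=
  Pi.single_comp_equiv σ⁻¹ i a

theorem sub_permAct_swap (u : Fin n → ℝ) (i j : Fin n) :
    u - permAct (Equiv.swap i j) u = (u i - u j) • (Pi.single i 1 - Pi.single j 1) := by
  ext m
  rcases eq_or_ne m i with rfl | hmi
  · rcases eq_or_ne m j with rfl | hmj
    · simp [permAct]
    · simp [permAct, hmj]
  · rcases eq_or_ne m j with rfl | hmj
    · simp [permAct, hmi]
    · simp [permAct, hmi, hmj, Equiv.swap_apply_of_ne_of_ne hmi hmj]

theorem single_sub_single_mem_of_invariant {W : Submodule ℝ (Fin n → ℝ)}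
    (hW : ∀ σ, ∀ u ∈ W, permAct σ u ∈ W) {u : Fin n → ℝ} (hu : u ∈ W) {i j : Fin n}
    (hij : u i ≠ u j) {k l : Fin n} (hkl : k ≠ l) : Pi.single k 1 - Pi.single l 1 ∈ W := by
  have hsingle : Pi.single i (1 : ℝ) - Pi.single j 1 ∈ W := by
    have := W.smul_mem (u i - u j)⁻¹ (W.sub_mem hu (hW (Equiv.swap i j) u hu))
    rwa [sub_permAct_swap, smul_smul, inv_mul_cancel₀ (sub_ne_zero.2 hij), one_smul] at this
  obtain ⟨σ, rfl, rfl⟩ := Equiv.Perm.exists_apply_eq_apply_eq (ne_of_apply_ne u hij) hkl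
  simpa only [permAct_sub, permAct_single] using hW σ _ hsingle

theorem sumZero_le_of_single_sub_single_mem {W : Submodule ℝ (Fin n → ℝ)}
    (h : ∀ k l : Fin n, k ≠ l → Pi.single k 1 - Pi.single l 1 ∈ W) (i : Fin n) :
    sumZero n ≤ W := by
  intro w hw
  rw [mem_sumZero] at hw
  have hdecomp : w = ∑ k, w k • (Pi.single k 1 - Pi.single i 1) := by
    have hsingle : ∑ k, w k • (Pi.single k 1 : Fin n → ℝ) = w := by
      simp_rw [← Pi.single_smul', smul_eq_mul, mul_one]
      exact Finset.univ_sum_single w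
    simp only [smul_sub, Finset.sum_sub_distrib, ← Finset.sum_smul, hw, zero_smul, sub_zero,
      hsingle]
  rw [hdecomp]
  refine W.sum_mem fun k _ => W.smul_mem _ ?_
  rcases eq_or_ne k i with rfl | hki
  · simp
  · exact h k i hki

theorem diagonal_or_sumZero_of_invariant {W : Submodule ℝ (Fin n → ℝ)}
    (hW : ∀ σ, ∀ u ∈ W, permAct σ u ∈ W) : W ≤ diagonal n ∨ sumZero n ≤ W := by
  by_cases h : ∃ u ∈ W, ∃ i j, u i ≠ u j
  · obtain ⟨u, hu, i, j, hij⟩ := h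
    exact Or.inr <| sumZero_le_of_single_sub_single_mem
      (fun k l hkl => single_sub_single_mem_of_invariant hW hu hij hkl) i
  · push Not at h
    exact Or.inl fun u hu => mem_diagonal_iff_forall_eq.2 (h u hu)

theorem eq_bot_or_diagonal_or_sumZero_or_top_of_invariant (hn : n ≠ 0)
    {W : Submodule ℝ (Fin n → ℝ)} (hW : ∀ σ, ∀ u ∈ W, permAct σ u ∈ W) :
    W = ⊥ ∨ W = diagonal n ∨ W = sumZero n ∨ W = ⊤ := by
  rcases diagonal_or_sumZero_of_invariant hW with h | h
  · rcases (isAtom_diagonal hn).le_iff.1 h with h | h <;> simp [h]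
  · rcases (isCoatom_sumZero hn).le_iff.1 h with h | h <;> simp [h]

theorem mem_diagonal_of_permAct_sub_mem {W : Submodule ℝ (Fin n → ℝ)} (hW : W ≤ diagonal n)
    {x : Fin n → ℝ} (hx : ∀ σ, permAct σ x - x ∈ W) : x ∈ diagonal n := by
  refine mem_diagonal_iff_forall_eq.2 fun i j => ?_
  have := mem_diagonal_iff_forall_eq.1 (hW (hx (Equiv.swap i j))) i j
  simp only [permAct, Pi.sub_apply, Equiv.swap_inv, Equiv.swap_apply_left,
    Equiv.swap_apply_right] at this
  linarith

end Symmetric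

/-- Zero sets of symmetric SAGE signomials (n ≥ 2): if nonempty, the zero set is
either a singleton on the diagonal, the diagonal, or an affine hyperplane
`{x : Σ xᵢ = τ}`; in particular, there is a zero on the diagonal. -/
theorem stmt6 {n : ℕ} (hn : 2 ≤ n) (T : Finset (Fin n → ℝ)) (f : (Fin n → ℝ) → ℝ)
    (hSAGE : IsSAGE T f)
    (hsym : ∀ σ : Equiv.Perm (Fin n), ∀ x, f (permAct σ x) = f x)
    (hnc : ¬ ∃ k : ℝ, ∀ x, f x = k)
    (hne : {x : Fin n → ℝ | f x = 0}.Nonempty) :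
    ((∃ t : ℝ, {x : Fin n → ℝ | f x = 0} = {fun _ => t}) ∨
     ({x : Fin n → ℝ | f x = 0} = {x | ∃ t : ℝ, x = fun _ => t}) ∨
     (∃ τ : ℝ, {x : Fin n → ℝ | f x = 0} = {x | ∑ i, x i = τ})) ∧
    (∃ t : ℝ, f (fun _ => t) = 0) := by
  obtain ⟨x₀, hx₀ : f x₀ = 0⟩ := hne
  obtain ⟨W, hW⟩ := hSAGE.exists_submodule_zero_iff hx₀
  -- `LinearMap.funLeft ℝ ℝ ⇑σ⁻¹` is `permAct σ` as a linear map
  have hinv (σ : Equiv.Perm (Fin n)) :=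
    apply_sub_mem_and_apply_mem_of_zero_iff hW (L := LinearMap.funLeft ℝ ℝ ⇑σ⁻¹) (hsym σ)
  rcases eq_bot_or_diagonal_or_sumZero_or_top_of_invariant (by omega) fun σ => (hinv σ).2 with
    rfl | rfl | rfl | rfl
  · obtain ⟨t, rfl⟩ :=
      mem_diagonal_iff.1 (mem_diagonal_of_permAct_sub_mem bot_le fun σ => (hinv σ).1)
    refine ⟨Or.inl ⟨t, Set.ext fun x => ?_⟩, t, hx₀⟩
    rw [Set.mem_ofPred_eq, hW, Submodule.mem_bot, sub_eq_zero, Set.mem_singleton_iff]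
  · obtain ⟨t, rfl⟩ :=
      mem_diagonal_iff.1 (mem_diagonal_of_permAct_sub_mem le_rfl fun σ => (hinv σ).1)
    refine ⟨Or.inr (Or.inl (Set.ext fun x => ?_)), t, hx₀⟩
    rw [Set.mem_ofPred_eq, hW, Submodule.sub_mem_iff_left _ (mem_diagonal_iff.2 ⟨t, rfl⟩),
      mem_diagonal_iff, Set.mem_ofPred_eq]
  · refine ⟨Or.inr (Or.inr ⟨∑ i, x₀ i, Set.ext fun x => ?_⟩), (∑ i, x₀ i) / n, (hW _).2 ?_⟩
    · rw [Set.mem_ofPred_eq, hW, mem_sumZero, Set.mem_ofPred_eq]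
      simp [Finset.sum_sub_distrib, sub_eq_zero]
    · have : (n : ℝ) ≠ 0 := by positivity
      simp [mem_sumZero, Finset.sum_sub_distrib, mul_div_cancel₀ _ this]
  · exact (hnc ⟨0, fun x => (hW x).2 Submodule.mem_top⟩).elim
end

section
/- Let p be a non-constant SONC polynomial in n variables that is S_n-invariant, and let ω ∈ {−1,1}^n. Write V_{>0}(q) for the zero set of a polynomial q in the open positive orthant ℝ_{>0}^n. (1) If p^ω ≠ p̃, then V_{>0}(p^ω) is empty. (2) If p^ω = p̃, then V_{>0}(p^ω) = V_{>0}(p̃), and if this set is non-empty, it is either (a) a singleton {(t,…,t)} with t > 0, or (b) the positive diagonal {(t,…,t) : t > 0}, or (c) the set {x ∈ ℝ_{>0}^n : Π_{i=1}^n x_i = τ} for some constant τ > 0. -/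
/-!
Write `p = ∑_β g_β` with `g_β ∈ C_AG(T ∖ {β}, β)`. Replacing the coefficient of the inner term
`x^β` of each `g_β` by `-|·|` keeps it nonnegative (where this changes anything, it amounts to
negating a variable in which `x^β` is odd), and the resulting polynomials add up to `p̃`. Hence
`p̃ ≥ 0`, and since `p^ω - p̃` has nonnegative coefficients, `p^ω > p̃ ≥ 0` on the positive orthant
unless `p^ω = p̃`.

In logarithmic coordinates `y = log x`, each of these AG polynomials divided by its inner
monomial is a nonnegative combination of exponentials of linear forms plus a constant, a convex
function; by the equality case of convexity its zeros, once one zero `v` is known, are `v + L_β`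
with `L_β` orthogonal to the `α - β` carrying positive coefficients. So the positive zeros of `p̃`
are `exp (v + L)` for a subspace `L`, which is permutation invariant because `p̃` is symmetric and
proper because `p` is not constant. The only such subspaces are `0`, the diagonal and the
hyperplane `∑ yᵢ = 0`, and they give the point, the diagonal and the level set of `∏ xᵢ`.
-/

open Finset

namespace SONCZeros

section Polynomials

variable {n : ℕ}

theorem monom_mul (α : Fin n → ℕ) (x y : Fin n → ℝ) :
    monom α (fun i => x i * y i) = monom α x * monom α y := by
  simp only [monom, mul_pow, prod_mul_distrib]

theorem monom_exp (α : Fin n → ℕ) (y : Fin n → ℝ) :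
    monom α (fun i => Real.exp (y i)) = Real.exp ((fun i => (α i : ℝ)) ⬝ᵥ y) := by
  simp only [monom, dotProduct, Real.exp_sum, Real.exp_nat_mul]

theorem monom_pos {α : Fin n → ℕ} {x : Fin n → ℝ} (hx : ∀ i, 0 < x i) : 0 < monom α x :=
  prod_pos fun i _ => pow_pos (hx i) _

theorem monom_permAct (α : Fin n → ℕ) (σ : Equiv.Perm (Fin n)) (x : Fin n → ℝ) :
    monom α (permAct σ x) = monom (permActN σ⁻¹ α) x := by
  simp only [monom, permAct, permActN, inv_inv]
  exact Fintype.prod_equiv σ⁻¹ _ _ fun i => by simp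

theorem abs_monom_of_abs_eq_one {ω : Fin n → ℝ} (hω : ∀ i, |ω i| = 1) (α : Fin n → ℕ) :
    |monom α ω| = 1 := by
  simp [monom, abs_prod, hω]

theorem monom_of_even {ω : Fin n → ℝ} (hω : ∀ i, |ω i| = 1) {α : Fin n → ℕ}
    (hα : ∀ i, Even (α i)) : monom α ω = 1 := by
  simp only [monom, ← fun i => (hα i).pow_abs (ω i), hω, one_pow, prod_const_one]

theorem exists_monom_eq_neg_one {β : Fin n → ℕ} (hβ : ¬ ∀ i, Even (β i)) :
    ∃ ω : Fin n → ℝ, (∀ i, |ω i| = 1) ∧ monom β ω = -1 := by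
  classical
  obtain ⟨i₀, hi₀⟩ := not_forall.mp hβ
  refine ⟨fun i => if i = i₀ then -1 else 1, fun i => by dsimp only; split_ifs <;> simp, ?_⟩
  simp only [monom, ite_pow, one_pow, prod_ite_eq', mem_univ, if_true]
  exact (Nat.not_even_iff_odd.mp hi₀).neg_one_pow

noncomputable def sumMonom (T : Finset (Fin n → ℕ)) (a : (Fin n → ℕ) → ℝ) (x : Fin n → ℝ) : ℝ :=
  ∑ α ∈ T, a α * monom α x

theorem sumMonom_congr {T : Finset (Fin n → ℕ)} {a b : (Fin n → ℕ) → ℝ}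
    (h : ∀ α ∈ T, a α = b α) (x : Fin n → ℝ) : sumMonom T a x = sumMonom T b x :=
  sum_congr rfl fun α hα => by rw [h α hα]

theorem sumMonom_exp (T : Finset (Fin n → ℕ)) (a : (Fin n → ℕ) → ℝ) (y : Fin n → ℝ) :
    sumMonom T a (fun i => Real.exp (y i)) =
      ∑ α ∈ T, a α * Real.exp ((fun i => (α i : ℝ)) ⬝ᵥ y) := by
  simp only [sumMonom, monom_exp]

theorem sumMonom_mul_left (T : Finset (Fin n → ℕ)) (a : (Fin n → ℕ) → ℝ) (ω x : Fin n → ℝ) :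
    sumMonom T a (fun i => ω i * x i) = sumMonom T (fun α => a α * monom α ω) x := by
  simp only [sumMonom, monom_mul, mul_assoc]

theorem sumMonom_indicator {T U : Finset (Fin n → ℕ)} (hTU : T ⊆ U) (a : (Fin n → ℕ) → ℝ)
    (x : Fin n → ℝ) : sumMonom U ((T : Set (Fin n → ℕ)).indicator a) x = sumMonom T a x := by
  rw [sumMonom, sumMonom, ← sum_indicator_subset _ hTU]
  exact sum_congr rfl fun α _ => (Set.indicator_mul_left _ a (monom · x)).symm

theorem sumMonom_lt_sumMonom {T : Finset (Fin n → ℕ)} {a b : (Fin n → ℕ) → ℝ}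
    (hle : ∀ α ∈ T, a α ≤ b α) (hlt : ∃ α ∈ T, a α < b α) {x : Fin n → ℝ}
    (hx : ∀ i, 0 < x i) : sumMonom T a x < sumMonom T b x :=
  sum_lt_sum (fun α hα => mul_le_mul_of_nonneg_right (hle α hα) (monom_pos hx).le)
    (hlt.imp fun _ ⟨hα, h⟩ => ⟨hα, mul_lt_mul_of_pos_right h (monom_pos hx)⟩)

theorem eqOn_of_sumMonom_eq {S : Finset (Fin n → ℕ)} {a b : (Fin n → ℕ) → ℝ}
    (h : ∀ x, sumMonom S a x = sumMonom S b x) : ∀ α ∈ S, a α = b α := by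
  classical
  let P (a : (Fin n → ℕ) → ℝ) : MvPolynomial (Fin n) ℝ :=
    ∑ α ∈ S, MvPolynomial.monomial (Finsupp.equivFunOnFinite.symm α) (a α)
  have eval_P : ∀ a x, MvPolynomial.eval x (P a) = sumMonom S a x := by
    intro a x
    simp only [P, map_sum, MvPolynomial.eval_monomial, sumMonom, monom,
      Finsupp.prod_fintype _ _ (fun i => pow_zero (x i)), Finsupp.coe_equivFunOnFinite_symm]
  have hP : P a = P b := MvPolynomial.funext fun x => by rw [eval_P, eval_P, h]
  intro α hα
  have := congrArg (MvPolynomial.coeff (Finsupp.equivFunOnFinite.symm α)) hP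
  simpa [P, MvPolynomial.coeff_sum, MvPolynomial.coeff_monomial,
    Finsupp.equivFunOnFinite.symm.injective.eq_iff, hα] using this

theorem permActN_permActN (σ τ : Equiv.Perm (Fin n)) (α : Fin n → ℕ) :
    permActN σ (permActN τ α) = permActN (σ * τ) α :=
  rfl

@[simp]
theorem permActN_one (α : Fin n → ℕ) : permActN 1 α = α := rfl

noncomputable def permClosure (T : Finset (Fin n → ℕ)) : Finset (Fin n → ℕ) :=
  univ.biUnion fun σ => T.image (permActN σ)

theorem subset_permClosure (T : Finset (Fin n → ℕ)) : T ⊆ permClosure T := fun α hα =>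
  mem_biUnion.mpr ⟨1, mem_univ _, mem_image.mpr ⟨α, hα, permActN_one α⟩⟩

theorem permActN_mem_permClosure {T : Finset (Fin n → ℕ)} (σ : Equiv.Perm (Fin n))
    {α : Fin n → ℕ} (hα : α ∈ permClosure T) : permActN σ α ∈ permClosure T := by
  obtain ⟨τ, -, hτ⟩ := mem_biUnion.mp hα
  obtain ⟨γ, hγ, rfl⟩ := mem_image.mp hτ
  exact mem_biUnion.mpr ⟨σ * τ, mem_univ _, mem_image.mpr ⟨γ, hγ, (permActN_permActN σ τ γ).symm⟩⟩

theorem sumMonom_permAct_permClosure (T : Finset (Fin n → ℕ)) (a : (Fin n → ℕ) → ℝ)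
    (σ : Equiv.Perm (Fin n)) (x : Fin n → ℝ) :
    sumMonom (permClosure T) a (permAct σ x) =
      sumMonom (permClosure T) (fun α => a (permActN σ α)) x := by
  refine sum_nbij' (permActN σ⁻¹) (permActN σ) (fun α hα => permActN_mem_permClosure _ hα)
    (fun α hα => permActN_mem_permClosure _ hα) (fun α _ => ?_) (fun α _ => ?_) (fun α _ => ?_)
  · simp [permActN_permActN]
  · simp [permActN_permActN]
  · simp [monom_permAct, permActN_permActN]

theorem indicator_permActN_of_symm {T : Finset (Fin n → ℕ)} {c : (Fin n → ℕ) → ℝ}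
    {p : (Fin n → ℝ) → ℝ} (hp : ∀ x, p x = sumMonom T c x)
    (hsym : ∀ σ : Equiv.Perm (Fin n), ∀ x, p (permAct σ x) = p x) (σ : Equiv.Perm (Fin n)) :
    ∀ α ∈ permClosure T, (T : Set (Fin n → ℕ)).indicator c (permActN σ α) =
      (T : Set (Fin n → ℕ)).indicator c α := by
  refine eqOn_of_sumMonom_eq fun x => ?_
  rw [← sumMonom_permAct_permClosure, sumMonom_indicator (subset_permClosure T),
    sumMonom_indicator (subset_permClosure T), ← hp, ← hp, hsym]

/-- `p̃ = sumMonom T (tilde c)` for `p = sumMonom T c`. -/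
def tilde (a : (Fin n → ℕ) → ℝ) (α : Fin n → ℕ) : ℝ :=
  if ∀ i, Even (α i) then a α else -|a α|

theorem tilde_of_even {a : (Fin n → ℕ) → ℝ} {α : Fin n → ℕ} (hα : ∀ i, Even (α i)) :
    tilde a α = a α :=
  if_pos hα

theorem tilde_of_not_even {a : (Fin n → ℕ) → ℝ} {α : Fin n → ℕ} (hα : ¬ ∀ i, Even (α i)) :
    tilde a α = -|a α| :=
  if_neg hα

theorem tilde_indicator (T : Finset (Fin n → ℕ)) (a : (Fin n → ℕ) → ℝ) :
    tilde ((T : Set (Fin n → ℕ)).indicator a) = (T : Set (Fin n → ℕ)).indicator (tilde a) := by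
  funext α
  by_cases hα : α ∈ T <;> simp [tilde, hα]

theorem even_permActN_iff (σ : Equiv.Perm (Fin n)) (α : Fin n → ℕ) :
    (∀ i, Even (permActN σ α i)) ↔ ∀ i, Even (α i) :=
  (σ⁻¹.forall_congr_right (q := fun i => Even (α i)))

theorem sumMonom_tilde_permAct {T : Finset (Fin n → ℕ)} {c : (Fin n → ℕ) → ℝ}
    {p : (Fin n → ℝ) → ℝ} (hp : ∀ x, p x = sumMonom T c x)
    (hsym : ∀ σ : Equiv.Perm (Fin n), ∀ x, p (permAct σ x) = p x) (σ : Equiv.Perm (Fin n))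
    (x : Fin n → ℝ) : sumMonom T (tilde c) (permAct σ x) = sumMonom T (tilde c) x := by
  simp only [← sumMonom_indicator (subset_permClosure T), ← tilde_indicator,
    sumMonom_permAct_permClosure]
  refine sum_congr rfl fun α hα => ?_
  simp only [tilde, even_permActN_iff, indicator_permActN_of_symm hp hsym σ α hα]

/-- Coefficient form of `C_AG(T ∖ {β}, β)`, with the coefficients outside `T` ignored. -/
structure IsAGCoeff (T : Finset (Fin n → ℕ)) (β : Fin n → ℕ) (a : (Fin n → ℕ) → ℝ) : Prop where
  nonneg : ∀ α ∈ T.erase β, 0 ≤ a α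
  eq_zero_of_not_even : ∀ α ∈ T.erase β, (¬ ∀ i, Even (α i)) → a α = 0
  sumMonom_nonneg : ∀ x, 0 ≤ sumMonom T a x

theorem IsSONC.exists_isAGCoeff {T : Finset (Fin n → ℕ)} {p : (Fin n → ℝ) → ℝ}
    {c : (Fin n → ℕ) → ℝ} (hSONC : IsSONC T p) (hp : ∀ x, p x = sumMonom T c x) :
    ∃ a : (Fin n → ℕ) → (Fin n → ℕ) → ℝ,
      (∀ β ∈ T, IsAGCoeff T β (a β)) ∧ ∀ α ∈ T, c α = ∑ β ∈ T, a β α := by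
  classical
  obtain ⟨g, hg, hpg⟩ := hSONC
  choose! a ha_nonneg ha_odd hga hg_nonneg using hg
  have hg_eq : ∀ β ∈ T, ∀ x, g β x = sumMonom T (a β) x := fun β hβ x => by
    rw [hga β hβ, sumMonom, ← sum_erase_add T _ hβ]
  refine ⟨a, fun β hβ => ⟨ha_nonneg β hβ, ha_odd β hβ, fun x => ?_⟩, ?_⟩
  · rw [← hg_eq β hβ]
    exact hg_nonneg β hβ x
  · refine eqOn_of_sumMonom_eq fun x => ?_
    rw [← hp, hpg, sum_congr rfl fun β hβ => hg_eq β hβ x]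
    simp only [sumMonom, sum_mul]
    exact sum_comm

/-- For odd `α`, only the summand `a α α` can contribute to the coefficient of `x^α`. -/
theorem tilde_sum {T : Finset (Fin n → ℕ)} {a : (Fin n → ℕ) → (Fin n → ℕ) → ℝ}
    (ha : ∀ β ∈ T, IsAGCoeff T β (a β)) {α : Fin n → ℕ} (hα : α ∈ T) :
    tilde (∑ β ∈ T, a β) α = ∑ β ∈ T, tilde (a β) α := by
  by_cases hev : ∀ i, Even (α i)
  · simp only [tilde_of_even hev, Finset.sum_apply]
  · have hzero : ∀ β ∈ T, β ≠ α → a β α = 0 := fun β hβ hne =>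
      (ha β hβ).eq_zero_of_not_even α (mem_erase.mpr ⟨hne.symm, hα⟩) hev
    rw [tilde_of_not_even hev, Finset.sum_apply, sum_eq_single_of_mem α hα hzero,
      sum_eq_single_of_mem α hα fun β hβ hne => by
        rw [tilde_of_not_even hev, hzero β hβ hne, abs_zero, neg_zero],
      tilde_of_not_even hev]

theorem IsAGCoeff.tilde_eq_of_mem_erase {T : Finset (Fin n → ℕ)} {β : Fin n → ℕ}
    {a : (Fin n → ℕ) → ℝ} (ha : IsAGCoeff T β a) : ∀ α ∈ T.erase β, tilde a α = a α := by
  intro α hα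
  by_cases hev : ∀ i, Even (α i)
  · exact tilde_of_even hev
  · rw [tilde_of_not_even hev, ha.eq_zero_of_not_even α hα hev, abs_zero, neg_zero]

theorem IsAGCoeff.isAGCoeff_tilde {T : Finset (Fin n → ℕ)} {β : Fin n → ℕ} {a : (Fin n → ℕ) → ℝ}
    (ha : IsAGCoeff T β a) : IsAGCoeff T β (tilde a) := by
  refine ⟨fun α hα => (ha.tilde_eq_of_mem_erase α hα).symm ▸ ha.nonneg α hα,
    fun α hα hev => (ha.tilde_eq_of_mem_erase α hα).trans (ha.eq_zero_of_not_even α hα hev),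
    fun x => ?_⟩
  by_cases hβ : (∀ i, Even (β i)) ∨ a β ≤ 0
  · have htβ : tilde a β = a β := by
      rcases hβ with hev | hle
      · exact tilde_of_even hev
      · by_cases hev : ∀ i, Even (β i)
        · exact tilde_of_even hev
        · rw [tilde_of_not_even hev, abs_of_nonpos hle, neg_neg]
    rw [sumMonom_congr (b := a) (fun α hα => ?_)]
    · exact ha.sumMonom_nonneg x
    · by_cases hαβ : α = β
      · rw [hαβ, htβ]
      · exact ha.tilde_eq_of_mem_erase α (mem_erase.mpr ⟨hαβ, hα⟩)
  · obtain ⟨hodd, hpos⟩ := not_or.mp hβ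
    rw [not_le] at hpos
    obtain ⟨ω, hω, hωβ⟩ := exists_monom_eq_neg_one hodd
    rw [sumMonom_congr (b := fun α => a α * monom α ω) (fun α hα => ?_), ← sumMonom_mul_left]
    · exact ha.sumMonom_nonneg _
    · by_cases hαβ : α = β
      · rw [hαβ, hωβ, tilde_of_not_even hodd, abs_of_pos hpos, mul_neg_one]
      · have hα' := mem_erase.mpr ⟨hαβ, hα⟩
        rw [ha.tilde_eq_of_mem_erase α hα']
        by_cases hev : ∀ i, Even (α i)
        · rw [monom_of_even hω hev, mul_one]
        · rw [ha.eq_zero_of_not_even α hα' hev, zero_mul]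

theorem sumMonom_tilde_eq_sum {T : Finset (Fin n → ℕ)} {c : (Fin n → ℕ) → ℝ}
    {a : (Fin n → ℕ) → (Fin n → ℕ) → ℝ} (ha : ∀ β ∈ T, IsAGCoeff T β (a β))
    (hca : ∀ α ∈ T, c α = ∑ β ∈ T, a β α) (x : Fin n → ℝ) :
    sumMonom T (tilde c) x = ∑ β ∈ T, sumMonom T (tilde (a β)) x := by
  have hc : ∀ α ∈ T, tilde c α = ∑ β ∈ T, tilde (a β) α := fun α hα => by
    rw [← tilde_sum ha hα, tilde, tilde, hca α hα, Finset.sum_apply]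
  rw [sumMonom_congr hc]
  simp only [sumMonom, sum_mul]
  exact sum_comm

theorem tilde_le_mul_monom {ω : Fin n → ℝ} (hω : ∀ i, |ω i| = 1) (a : (Fin n → ℕ) → ℝ)
    (α : Fin n → ℕ) : tilde a α ≤ a α * monom α ω := by
  by_cases hev : ∀ i, Even (α i)
  · rw [tilde_of_even hev, monom_of_even hω hev, mul_one]
  · rw [tilde_of_not_even hev]
    calc -|a α| = -|a α * monom α ω| := by rw [abs_mul, abs_monom_of_abs_eq_one hω, mul_one]
      _ ≤ a α * monom α ω := neg_abs_le _

theorem sumMonom_tilde_lt_of_ne {T : Finset (Fin n → ℕ)} {c : (Fin n → ℕ) → ℝ}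
    {ω : Fin n → ℝ} (hω : ∀ i, |ω i| = 1)
    (hne : sumMonom T (fun α => c α * monom α ω) ≠ sumMonom T (tilde c)) {x : Fin n → ℝ}
    (hx : ∀ i, 0 < x i) : sumMonom T (tilde c) x < sumMonom T (fun α => c α * monom α ω) x := by
  obtain ⟨α, hα, hlt⟩ : ∃ α ∈ T, tilde c α < c α * monom α ω := by
    by_contra! h
    exact hne (funext (sumMonom_congr fun α hα => (h α hα).antisymm (tilde_le_mul_monom hω c α)))
  exact sumMonom_lt_sumMonom (fun α _ => tilde_le_mul_monom hω c α) ⟨α, hα, hlt⟩ hx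

end Polynomials

theorem exp_midpoint_lt {s u : ℝ} (h : s ≠ u) :
    Real.exp ((s + u) / 2) < (Real.exp s + Real.exp u) / 2 := by
  have := strictConvexOn_exp.2 (Set.mem_univ s) (Set.mem_univ u) h (by norm_num : (0 : ℝ) < 1 / 2)
    (by norm_num : (0 : ℝ) < 1 / 2) (by norm_num)
  simp only [smul_eq_mul, ← mul_add] at this
  rwa [div_eq_inv_mul, div_eq_inv_mul, ← one_div]

theorem exp_midpoint_le (s u : ℝ) : Real.exp ((s + u) / 2) ≤ (Real.exp s + Real.exp u) / 2 := by
  rcases eq_or_ne s u with rfl | h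
  · rw [add_self_div_two, add_self_div_two]
  · exact (exp_midpoint_lt h).le

/-- Equality case in the midpoint convexity of `exp`. -/
theorem sum_mul_exp_add_eq_zero_iff {ι : Type*} {A : Finset ι} {a s u : ι → ℝ} {t : ℝ}
    (ha : ∀ i ∈ A, 0 ≤ a i) (hs : ∑ i ∈ A, a i * Real.exp (s i) + t = 0)
    (hmid : 0 ≤ ∑ i ∈ A, a i * Real.exp ((s i + u i) / 2) + t) :
    ∑ i ∈ A, a i * Real.exp (u i) + t = 0 ↔ ∀ i ∈ A, 0 < a i → u i = s i := by
  constructor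
  · intro hu
    by_contra! ⟨i₀, hi₀, hpos, hne⟩
    have hlt : ∑ i ∈ A, a i * Real.exp ((s i + u i) / 2) <
        ∑ i ∈ A, a i * ((Real.exp (s i) + Real.exp (u i)) / 2) :=
      sum_lt_sum (fun i hi => mul_le_mul_of_nonneg_left (exp_midpoint_le _ _) (ha i hi))
        ⟨i₀, hi₀, mul_lt_mul_of_pos_left (exp_midpoint_lt hne.symm) hpos⟩
    have hsum : ∑ i ∈ A, a i * ((Real.exp (s i) + Real.exp (u i)) / 2) =
        (∑ i ∈ A, a i * Real.exp (s i) + ∑ i ∈ A, a i * Real.exp (u i)) / 2 := by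
      rw [← sum_add_distrib, sum_div]
      exact sum_congr rfl fun i _ => by ring
    linarith
  · intro hsu
    rw [← hs]
    congr 1
    refine sum_congr rfl fun i hi => ?_
    rcases (ha i hi).eq_or_lt with h0 | hpos
    · rw [← h0, zero_mul, zero_mul]
    · rw [hsu i hi hpos]

/-- Divided by `exp ⟨e β, y⟩`, the signomial becomes a convex function of `y`, to which the
equality case above applies at the midpoint of `v` and `y`. -/
theorem sum_mul_exp_dotProduct_eq_zero_iff {ι m : Type*} [Fintype m] [DecidableEq ι]
    {T : Finset ι} {β : ι} (hβ : β ∈ T) {a : ι → ℝ} {e : ι → m → ℝ}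
    (ha : ∀ α ∈ T.erase β, 0 ≤ a α) (hnn : ∀ y, 0 ≤ ∑ α ∈ T, a α * Real.exp (e α ⬝ᵥ y))
    {v : m → ℝ} (hv : ∑ α ∈ T, a α * Real.exp (e α ⬝ᵥ v) = 0) (y : m → ℝ) :
    ∑ α ∈ T, a α * Real.exp (e α ⬝ᵥ y) = 0 ↔
      ∀ α ∈ T.erase β, 0 < a α → (e α - e β) ⬝ᵥ (y - v) = 0 := by
  set φ : (m → ℝ) → ℝ := fun y => ∑ α ∈ T.erase β, a α * Real.exp ((e α - e β) ⬝ᵥ y) + a β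
  have factor : ∀ y, ∑ α ∈ T, a α * Real.exp (e α ⬝ᵥ y) = Real.exp (e β ⬝ᵥ y) * φ y := by
    intro y
    rw [← sum_erase_add T _ hβ, mul_add, mul_sum, mul_comm (a β)]
    congr 1
    refine sum_congr rfl fun α _ => ?_
    rw [mul_left_comm, ← Real.exp_add, sub_dotProduct, add_sub_cancel]
  have zero_iff : ∀ y, ∑ α ∈ T, a α * Real.exp (e α ⬝ᵥ y) = 0 ↔ φ y = 0 := fun y => by
    rw [factor, mul_eq_zero, or_iff_right (Real.exp_ne_zero _)]
  have hmid : 0 ≤ φ ((1 / 2 : ℝ) • (v + y)) :=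
    (mul_nonneg_iff_of_pos_left (Real.exp_pos _)).mp (factor _ ▸ hnn _)
  simp only [φ, dotProduct_smul, dotProduct_add, smul_eq_mul, one_div, inv_mul_eq_div] at hmid
  rw [zero_iff, sum_mul_exp_add_eq_zero_iff ha ((zero_iff v).mp hv) hmid]
  simp only [dotProduct_sub, sub_eq_zero]

section PermInvariantSubspaces

variable {K : Type*} [Field K] {ι : Type*}

def dotAnnihilator [Fintype ι] (S : Set (ι → K)) : Submodule K (ι → K) where
  carrier := {d | ∀ w ∈ S, w ⬝ᵥ d = 0}
  add_mem' ha hb w hw := by rw [dotProduct_add, ha w hw, hb w hw, add_zero]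
  zero_mem' w _ := dotProduct_zero w
  smul_mem' r d hd w hw := by rw [dotProduct_smul, hd w hw, smul_zero]

theorem mem_dotAnnihilator [Fintype ι] {S : Set (ι → K)} {d : ι → K} :
    d ∈ dotAnnihilator S ↔ ∀ w ∈ S, w ⬝ᵥ d = 0 :=
  Iff.rfl

theorem mem_dotAnnihilator_one [Fintype ι] {d : ι → K} :
    d ∈ dotAnnihilator {1} ↔ ∑ i, d i = 0 := by
  simp [mem_dotAnnihilator, one_dotProduct]

theorem eq_zero_of_mem_span_one_of_sum_eq_zero [Fintype ι] [CharZero K] {w : ι → K}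
    (hw : w ∈ K ∙ 1) (hsum : ∑ i, w i = 0) : w = 0 := by
  obtain ⟨a, rfl⟩ := Submodule.mem_span_singleton.mp hw
  simp only [Pi.smul_apply, Pi.one_apply, smul_eq_mul, mul_one, sum_const, card_univ,
    nsmul_eq_mul, mul_eq_zero, Nat.cast_eq_zero, Fintype.card_eq_zero_iff] at hsum
  rcases hsum with hempty | rfl
  · exact Subsingleton.elim _ _
  · exact zero_smul K 1

variable {L : Submodule K (ι → K)}

theorem single_sub_single_mem [DecidableEq ι] (hL : ∀ σ : Equiv.Perm ι, ∀ d ∈ L, d ∘ σ ∈ L)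
    {d : ι → K} (hd : d ∈ L) {i j : ι} (hij : d i ≠ d j) (k l : ι) :
    Pi.single k (1 : K) - Pi.single l 1 ∈ L := by
  have hne : i ≠ j := fun h => hij (h ▸ rfl)
  have hi : ∀ m, Pi.single i (1 : K) - Pi.single m 1 ∈ L := by
    have hij' : Pi.single i (1 : K) - Pi.single j 1 ∈ L := by
      have h := L.smul_mem (d i - d j)⁻¹ (L.sub_mem hd (hL (Equiv.swap i j) d hd))
      convert h using 1
      ext k
      have hdij := sub_ne_zero.mpr hij
      by_cases hki : k = i
      · subst hki
        simp [hne, inv_mul_cancel₀ hdij]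
      by_cases hkj : k = j
      · subst hkj
        simp [hne.symm]
        rw [← neg_sub (d i), mul_neg, inv_mul_cancel₀ hdij]
      simp [Equiv.swap_apply_of_ne_of_ne hki hkj, hki, hkj]
    intro m
    by_cases hm : m = i
    · simp [hm]
    · convert hL (Equiv.swap j m) _ hij' using 1
      ext k
      simp only [Pi.sub_apply, Function.comp_apply, Pi.single_apply, Equiv.swap_apply_def]
      split_ifs <;> simp_all
  convert L.sub_mem (hi l) (hi k) using 1
  abel

theorem dotAnnihilator_one_le [Fintype ι] [DecidableEq ι]
    (hL : ∀ σ : Equiv.Perm ι, ∀ d ∈ L, d ∘ σ ∈ L) {d : ι → K} (hd : d ∈ L) {i j : ι}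
    (hij : d i ≠ d j) : dotAnnihilator {1} ≤ L := by
  intro v hv
  have hv_eq : v = ∑ k, v k • (Pi.single k (1 : K) - Pi.single i 1) := by
    simp only [smul_sub, sum_sub_distrib, ← sum_smul, mem_dotAnnihilator_one.mp hv, zero_smul,
      sub_zero]
    exact pi_eq_sum_univ' v
  rw [hv_eq]
  exact L.sum_mem fun k _ => L.smul_mem _ (single_sub_single_mem hL hd hij k i)

theorem eq_top_of_dotAnnihilator_one_lt [Fintype ι] (hlt : dotAnnihilator {1} < L) : L = ⊤ := by
  obtain ⟨d, hd, hsum⟩ := SetLike.exists_of_lt hlt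
  rw [mem_dotAnnihilator_one] at hsum
  refine eq_top_iff.mpr fun v _ => ?_
  set r := (∑ i, v i) / ∑ i, d i
  have hrest : v - r • d ∈ dotAnnihilator {1} := by
    rw [mem_dotAnnihilator_one]
    simp only [Pi.sub_apply, Pi.smul_apply, smul_eq_mul, sum_sub_distrib, ← mul_sum, r,
      div_mul_cancel₀ _ hsum, sub_self]
  simpa using L.add_mem (hlt.le hrest) (L.smul_mem r hd)

theorem le_span_one_of_forall_eq (hconst : ∀ d ∈ L, ∀ i j, d i = d j) : L ≤ K ∙ 1 := by
  intro d hd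
  rw [Submodule.mem_span_singleton]
  rcases isEmpty_or_nonempty ι with hempty | ⟨⟨i₀⟩⟩
  · exact ⟨0, Subsingleton.elim _ _⟩
  · exact ⟨d i₀, funext fun i => by simp [hconst d hd i i₀]⟩

theorem eq_bot_or_eq_span_one_or_eq_dotAnnihilator_one_or_eq_top [Fintype ι] [DecidableEq ι]
    (hL : ∀ σ : Equiv.Perm ι, ∀ d ∈ L, d ∘ σ ∈ L) :
    L = ⊥ ∨ L = K ∙ 1 ∨ L = dotAnnihilator {1} ∨ L = ⊤ := by
  by_cases hconst : ∀ d ∈ L, ∀ i j, d i = d j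
  · have hle := le_span_one_of_forall_eq hconst
    by_cases h1 : (1 : ι → K) = 0
    · rw [h1, Submodule.span_singleton_eq_bot.mpr rfl] at hle
      exact Or.inl (le_bot_iff.mp hle)
    · exact ((nonzero_span_atom 1 h1).le_iff.mp hle).imp_right Or.inl
  · simp only [not_forall] at hconst
    obtain ⟨d, hd, i, j, hij⟩ := hconst
    have hle := dotAnnihilator_one_le hL hd hij
    by_cases hL1 : L ≤ dotAnnihilator {1}
    · exact Or.inr (Or.inr (Or.inl (le_antisymm hL1 hle)))
    · exact Or.inr (Or.inr (Or.inr (eq_top_of_dotAnnihilator_one_lt (lt_of_le_not_ge hle hL1))))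

end PermInvariantSubspaces

section ExpCoset

variable {ι : Type*}

/-- The image of the coset `v + L` under the coordinatewise exponential. -/
def expCoset (v : ι → ℝ) (L : Submodule ℝ (ι → ℝ)) : Set (ι → ℝ) :=
  {x | (∀ i, 0 < x i) ∧ (fun i => Real.log (x i)) - v ∈ L}

theorem expCoset_const_bot (s : ℝ) : expCoset (fun _ : ι => s) ⊥ = {fun _ => Real.exp s} := by
  ext x
  simp only [expCoset, Submodule.mem_bot, sub_eq_zero, Set.mem_ofPred_eq, Set.mem_singleton_iff]
  constructor
  · rintro ⟨hx, hlog⟩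
    funext i
    rw [← Real.exp_log (hx i), congrFun hlog i]
  · rintro rfl
    exact ⟨fun _ => Real.exp_pos s, funext fun _ => Real.log_exp s⟩

theorem expCoset_const_span_one (s : ℝ) :
    expCoset (fun _ : ι => s) (ℝ ∙ 1) = {x | ∃ t : ℝ, 0 < t ∧ x = fun _ => t} := by
  ext x
  simp only [expCoset, Submodule.mem_span_singleton, Set.mem_ofPred_eq]
  constructor
  · rintro ⟨hx, r, hr⟩
    refine ⟨Real.exp (r + s), Real.exp_pos _, funext fun i => ?_⟩
    have hri : r = Real.log (x i) - s := by simpa using congrFun hr i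
    rw [← Real.exp_log (hx i), hri, sub_add_cancel]
  · rintro ⟨t, ht, rfl⟩
    exact ⟨fun _ => ht, Real.log t - s, funext fun _ => by simp⟩

theorem expCoset_dotAnnihilator_one [Fintype ι] (v : ι → ℝ) :
    expCoset v (dotAnnihilator {1}) =
      {x | (∀ i, 0 < x i) ∧ ∏ i, x i = Real.exp (∑ i, v i)} := by
  ext x
  simp only [expCoset, mem_dotAnnihilator_one, Set.mem_ofPred_eq, and_congr_right_iff]
  intro hx
  rw [← prod_congr rfl fun i _ => Real.exp_log (hx i), ← Real.exp_sum, Real.exp_eq_exp]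
  simp only [Pi.sub_apply, sum_sub_distrib, sub_eq_zero]

theorem exists_eq_const_of_forall_comp_perm_eq {α : Type*} [Nonempty α] {v : ι → α}
    (hv : ∀ σ : Equiv.Perm ι, v ∘ σ = v) : ∃ s, v = fun _ => s := by
  classical
  rcases isEmpty_or_nonempty ι with hempty | ⟨⟨i₀⟩⟩
  · exact ⟨Classical.arbitrary α, funext isEmptyElim⟩
  · exact ⟨v i₀, funext fun i => by simpa using (congrFun (hv (Equiv.swap i i₀)) i).symm⟩

theorem expCoset_trichotomy [Fintype ι] [DecidableEq ι] {v : ι → ℝ}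
    {L : Submodule ℝ (ι → ℝ)} (hL : L ≠ ⊤)
    (hinv : ∀ σ : Equiv.Perm ι, ∀ y, y - v ∈ L → y ∘ σ - v ∈ L) :
    (∃ t : ℝ, 0 < t ∧ expCoset v L = {fun _ => t}) ∨
      expCoset v L = {x | ∃ t : ℝ, 0 < t ∧ x = fun _ => t} ∨
      ∃ τ : ℝ, 0 < τ ∧ expCoset v L = {x | (∀ i, 0 < x i) ∧ ∏ i, x i = τ} := by
  have hv : ∀ σ : Equiv.Perm ι, v ∘ σ - v ∈ L := fun σ => hinv σ v (by simp)
  have hLσ : ∀ σ : Equiv.Perm ι, ∀ d ∈ L, d ∘ σ ∈ L := fun σ d hd => by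
    convert L.sub_mem (hinv σ (v + d) (by simpa using hd)) (hv σ) using 1
    ext i
    simp
  have hconst : L ≤ ℝ ∙ 1 → ∃ s, v = fun _ => s := fun hle =>
    exists_eq_const_of_forall_comp_perm_eq fun σ => sub_eq_zero.mp <|
      eq_zero_of_mem_span_one_of_sum_eq_zero (hle (hv σ)) <| by
        simp only [Pi.sub_apply, Function.comp_apply, sum_sub_distrib, Equiv.sum_comp, sub_self]
  rcases eq_bot_or_eq_span_one_or_eq_dotAnnihilator_one_or_eq_top hLσ with h | h | h | h
  · obtain ⟨s, rfl⟩ := hconst (h ▸ bot_le)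
    exact Or.inl ⟨Real.exp s, Real.exp_pos s, h ▸ expCoset_const_bot s⟩
  · obtain ⟨s, rfl⟩ := hconst h.le
    exact Or.inr (Or.inl (h ▸ expCoset_const_span_one s))
  · exact Or.inr (Or.inr ⟨_, Real.exp_pos _, h ▸ expCoset_dotAnnihilator_one v⟩)
  · exact absurd h hL

theorem setOf_pos_eq_zero_eq_expCoset {q : (ι → ℝ) → ℝ} {v : ι → ℝ} {L : Submodule ℝ (ι → ℝ)}
    (hq : ∀ y, q (fun i => Real.exp (y i)) = 0 ↔ y - v ∈ L) :
    {x | (∀ i, 0 < x i) ∧ q x = 0} = expCoset v L := by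
  ext x
  simp only [expCoset, Set.mem_ofPred_eq, and_congr_right_iff]
  intro hx
  have hexp : (fun i => Real.exp (Real.log (x i))) = x := funext fun i => Real.exp_log (hx i)
  rw [← hq, hexp]

end ExpCoset

section ZeroSet

variable {n : ℕ} {T : Finset (Fin n → ℕ)} {b : (Fin n → ℕ) → (Fin n → ℕ) → ℝ}

def agDirections (T : Finset (Fin n → ℕ)) (b : (Fin n → ℕ) → (Fin n → ℕ) → ℝ) :
    Set (Fin n → ℝ) :=
  {w | ∃ β ∈ T, ∃ α ∈ T.erase β, 0 < b β α ∧ w = (fun i => (α i : ℝ)) - fun i => (β i : ℝ)}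

theorem sum_sumMonom_exp_eq_zero_iff (hb : ∀ β ∈ T, IsAGCoeff T β (b β)) {v : Fin n → ℝ}
    (hv : ∑ β ∈ T, sumMonom T (b β) (fun i => Real.exp (v i)) = 0) (y : Fin n → ℝ) :
    ∑ β ∈ T, sumMonom T (b β) (fun i => Real.exp (y i)) = 0 ↔
      y - v ∈ dotAnnihilator (agDirections T b) := by
  have hnn : ∀ β ∈ T, ∀ x, 0 ≤ sumMonom T (b β) x := fun β hβ => (hb β hβ).sumMonom_nonneg
  rw [sum_eq_zero_iff_of_nonneg fun β hβ => hnn β hβ _] at hv ⊢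
  have key : ∀ β ∈ T, sumMonom T (b β) (fun i => Real.exp (y i)) = 0 ↔
      ∀ α ∈ T.erase β, 0 < b β α →
        ((fun i => (α i : ℝ)) - fun i => (β i : ℝ)) ⬝ᵥ (y - v) = 0 := fun β hβ => by
    rw [sumMonom_exp]
    refine sum_mul_exp_dotProduct_eq_zero_iff hβ (hb β hβ).nonneg (fun y => ?_) ?_ y
    · simpa only [sumMonom_exp] using hnn β hβ fun i => Real.exp (y i)
    · simpa only [sumMonom_exp] using hv β hβ
  refine ⟨fun h w ⟨β, hβ, α, hα, hpos, hw⟩ => hw ▸ (key β hβ).mp (h β hβ) α hα hpos,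
    fun h β hβ => (key β hβ).mpr fun α hα hpos => h _ ⟨β, hβ, α, hα, hpos, rfl⟩⟩

theorem sum_sumMonom_eq_zero_of_dotAnnihilator_eq_top (hb : ∀ β ∈ T, IsAGCoeff T β (b β))
    {v : Fin n → ℝ} (hv : ∑ β ∈ T, sumMonom T (b β) (fun i => Real.exp (v i)) = 0)
    (htop : dotAnnihilator (agDirections T b) = ⊤) (x : Fin n → ℝ) :
    ∑ β ∈ T, sumMonom T (b β) x = 0 := by
  rw [sum_eq_zero_iff_of_nonneg fun β hβ => (hb β hβ).sumMonom_nonneg _] at hv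
  refine sum_eq_zero fun β hβ => ?_
  have hoff : ∀ α ∈ T.erase β, b β α = 0 := by
    intro α hα
    refine le_antisymm (not_lt.mp fun hpos => ?_) ((hb β hβ).nonneg α hα)
    set w : Fin n → ℝ := (fun i => (α i : ℝ)) - fun i => (β i : ℝ)
    have hw : w ⬝ᵥ w = 0 := by
      have hw_mem : w ∈ dotAnnihilator (agDirections T b) := htop ▸ Submodule.mem_top
      exact hw_mem w ⟨β, hβ, α, hα, hpos, rfl⟩
    refine (mem_erase.mp hα).1 (funext fun i => ?_)
    simpa [w, sub_eq_zero] using congrFun (dotProduct_self_eq_zero.mp hw) i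
  have hsingle : ∀ x, sumMonom T (b β) x = b β β * monom β x := fun x =>
    sum_eq_single_of_mem β hβ fun α hα hne => by rw [hoff α (mem_erase.mpr ⟨hne, hα⟩), zero_mul]
  have hββ : b β β = 0 := by
    have := hv β hβ
    rwa [hsingle, mul_eq_zero, or_iff_left (monom_pos fun i => Real.exp_pos (v i)).ne'] at this
  rw [hsingle, hββ, zero_mul]

theorem setOf_pos_eq_zero_trichotomy (hb : ∀ β ∈ T, IsAGCoeff T β (b β))
    {q : (Fin n → ℝ) → ℝ} (hq : ∀ x, q x = ∑ β ∈ T, sumMonom T (b β) x)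
    (hsym : ∀ σ : Equiv.Perm (Fin n), ∀ x, q (permAct σ x) = q x) (hq0 : ¬ ∀ x, q x = 0)
    (hZ : {x : Fin n → ℝ | (∀ i, 0 < x i) ∧ q x = 0}.Nonempty) :
    (∃ t : ℝ, 0 < t ∧ {x : Fin n → ℝ | (∀ i, 0 < x i) ∧ q x = 0} = {fun _ => t}) ∨
      {x : Fin n → ℝ | (∀ i, 0 < x i) ∧ q x = 0} = {x | ∃ t : ℝ, 0 < t ∧ x = fun _ => t} ∨
      ∃ τ : ℝ, 0 < τ ∧
        {x : Fin n → ℝ | (∀ i, 0 < x i) ∧ q x = 0} = {x | (∀ i, 0 < x i) ∧ ∏ i, x i = τ} := by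
  obtain ⟨xs, hxs, hxs0⟩ := hZ
  set v : Fin n → ℝ := fun i => Real.log (xs i)
  have hv : ∑ β ∈ T, sumMonom T (b β) (fun i => Real.exp (v i)) = 0 := by
    simpa only [v, Real.exp_log (hxs _), ← hq] using hxs0
  have hqL : ∀ y, q (fun i => Real.exp (y i)) = 0 ↔ y - v ∈ dotAnnihilator (agDirections T b) :=
    fun y => by rw [hq]; exact sum_sumMonom_exp_eq_zero_iff hb hv y
  rw [setOf_pos_eq_zero_eq_expCoset hqL]
  refine expCoset_trichotomy (fun htop => hq0 fun x => ?_) fun σ y hy => ?_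
  · rw [hq]
    exact sum_sumMonom_eq_zero_of_dotAnnihilator_eq_top hb hv htop x
  · have hperm : (fun i => Real.exp ((y ∘ σ) i)) = permAct σ⁻¹ fun i => Real.exp (y i) := by
      funext i
      simp [permAct]
    rwa [← hqL, hperm, hsym, hqL]

end ZeroSet

end SONCZeros

open SONCZeros

/-- Zeroes of symmetric SONC polynomials in the open positive orthant:
(1) if `p^ω ≠ p̃` then `p^ω` has no positive zero;
(2) if `p^ω = p̃` and the positive zero set is nonempty, it is a singleton on the
diagonal, the positive diagonal, or `{x > 0 : Π xᵢ = τ}` for some `τ > 0`. -/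
theorem stmt7 {n : ℕ} (T : Finset (Fin n → ℕ)) (c : (Fin n → ℕ) → ℝ)
    (p : (Fin n → ℝ) → ℝ) (hp : ∀ x, p x = ∑ α ∈ T, c α * monom α x)
    (hSONC : IsSONC T p)
    (hsym : ∀ σ : Equiv.Perm (Fin n), ∀ x, p (permAct σ x) = p x)
    (hnc : ¬ ∃ k : ℝ, ∀ x, p x = k)
    (ω : Fin n → ℝ) (hω : ∀ i, ω i = 1 ∨ ω i = -1)
    (pω : (Fin n → ℝ) → ℝ) (hpω : ∀ x, pω x = p (fun i => ω i * x i))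
    (ptil : (Fin n → ℝ) → ℝ)
    (hptil : ∀ x, ptil x = ∑ α ∈ T,
      (if (∀ i, Even (α i)) then c α else -|c α|) * monom α x) :
    (pω ≠ ptil → {x : Fin n → ℝ | (∀ i, 0 < x i) ∧ pω x = 0} = ∅) ∧
    (pω = ptil →
      ({x : Fin n → ℝ | (∀ i, 0 < x i) ∧ pω x = 0}
        = {x : Fin n → ℝ | (∀ i, 0 < x i) ∧ ptil x = 0}) ∧
      ({x : Fin n → ℝ | (∀ i, 0 < x i) ∧ pω x = 0}.Nonempty →
        (∃ t : ℝ, 0 < t ∧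
          {x : Fin n → ℝ | (∀ i, 0 < x i) ∧ pω x = 0} = {fun _ => t}) ∨
        ({x : Fin n → ℝ | (∀ i, 0 < x i) ∧ pω x = 0}
          = {x | ∃ t : ℝ, 0 < t ∧ x = fun _ => t}) ∨
        (∃ τ : ℝ, 0 < τ ∧
          {x : Fin n → ℝ | (∀ i, 0 < x i) ∧ pω x = 0}
            = {x | (∀ i, 0 < x i) ∧ ∏ i, x i = τ}))) := by
  have hptil' : ptil = sumMonom T (tilde c) := funext hptil
  have hpω' : pω = sumMonom T (fun α => c α * monom α ω) := funext fun x => by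
    rw [hpω, hp, ← sumMonom_mul_left]
    rfl
  obtain ⟨a, ha, hca⟩ := hSONC.exists_isAGCoeff hp
  have hb : ∀ β ∈ T, IsAGCoeff T β (tilde (a β)) := fun β hβ => (ha β hβ).isAGCoeff_tilde
  have hptil_sum : ∀ x, ptil x = ∑ β ∈ T, sumMonom T (tilde (a β)) x := fun x =>
    hptil' ▸ sumMonom_tilde_eq_sum ha hca x
  have hω_abs : ∀ i, |ω i| = 1 := fun i => by rcases hω i with h | h <;> simp [h]
  refine ⟨fun hne => ?_, fun heq => ⟨by rw [heq], fun hZ => ?_⟩⟩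
  · refine Set.eq_empty_of_forall_notMem fun x ⟨hx, hx0⟩ => ?_
    have hlt := sumMonom_tilde_lt_of_ne hω_abs (hpω' ▸ hptil' ▸ hne) hx
    rw [← hpω', ← hptil', hx0, hptil_sum] at hlt
    exact hlt.not_ge (sum_nonneg fun β hβ => (hb β hβ).sumMonom_nonneg x)
  · rw [heq] at hZ ⊢
    have hptil_symm : ∀ σ x, ptil (permAct σ x) = ptil x := fun σ x => by
      rw [hptil', sumMonom_tilde_permAct hp hsym]
    refine setOf_pos_eq_zero_trichotomy hb hptil_sum hptil_symm (fun h0 => hnc ⟨0, fun x => ?_⟩) hZ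
    have hωω : (fun i => ω i * (ω i * x i)) = x := funext fun i => by
      rcases hω i with h | h <;> simp [h]
    rw [← hωω, ← hpω, heq, h0]
end

section
/- The nonnegative symmetric polynomial p(x₁,x₂) = (1 − x₁² − x₂²)² ∈ ℝ[x₁,x₂] is not a SONC polynomial, i.e., p ∉ C_SONC(T) for its support set T = {(0,0),(2,0),(0,2),(4,0),(0,4),(2,2)}. -/
open Finset

/-- The nonnegative symmetric polynomial `p(x₁,x₂) = (1 - x₁² - x₂²)²` is not a
SONC polynomial on its support. -/
theorem stmt8 (p : (Fin 2 → ℝ) → ℝ) (hp : ∀ x, p x = (1 - x 0 ^ 2 - x 1 ^ 2) ^ 2)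
    (T : Finset (Fin 2 → ℕ))
    (hT : T = {![0,0], ![2,0], ![0,2], ![4,0], ![0,4], ![2,2]}) :
    (∀ x, 0 ≤ p x) ∧ (∀ σ : Equiv.Perm (Fin 2), ∀ x, p (permAct σ x) = p x) ∧
    ¬ IsSONC T p := by
  have mval : ∀ (a b : ℕ) (u v : ℝ), monom ![a,b] ![u,v] = u^a * v^b := by
    intro a b u v; simp [monom, Fin.prod_univ_two]
  refine ⟨fun x => by rw [hp]; positivity, ?_, ?_⟩
  · intro σ x
    have h2 : x (σ⁻¹ 0) ^ 2 + x (σ⁻¹ 1) ^ 2 = x 0 ^ 2 + x 1 ^ 2 := by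
      simpa [Fin.sum_univ_two] using Equiv.sum_comp σ⁻¹ (fun i => x i ^ 2)
    simp only [hp, permAct]
    rw [show (1 : ℝ) - x (σ⁻¹ 0) ^ 2 - x (σ⁻¹ 1) ^ 2 = 1 - x 0 ^ 2 - x 1 ^ 2 by linarith]
  · subst hT
    rintro ⟨g, hg, hsum⟩
    have sumT : ∀ f : (Fin 2 → ℕ) → ℝ,
        ∑ α ∈ ({![0,0], ![2,0], ![0,2], ![4,0], ![0,4], ![2,2]} : Finset (Fin 2 → ℕ)), f α
          = f ![0,0] + f ![2,0] + f ![0,2] + f ![4,0] + f ![0,4] + f ![2,2] := by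
      intro f
      rw [Finset.sum_insert (by decide), Finset.sum_insert (by decide),
        Finset.sum_insert (by decide), Finset.sum_insert (by decide),
        Finset.sum_insert (by decide), Finset.sum_singleton]
      ring
    have key : ∀ β ∈ ({![0,0], ![2,0], ![0,2], ![4,0], ![0,4], ![2,2]} : Finset (Fin 2 → ℕ)),
        ∃ c : (Fin 2 → ℕ) → ℝ,
          (∀ α ∈ ({![0,0], ![2,0], ![0,2], ![4,0], ![0,4], ![2,2]} : Finset (Fin 2 → ℕ)).erase β,
            0 ≤ c α) ∧
          (∀ x, g β x = ∑ α ∈ ({![0,0], ![2,0], ![0,2], ![4,0], ![0,4], ![2,2]} :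
            Finset (Fin 2 → ℕ)), c α * monom α x) ∧
          (∀ x, 0 ≤ g β x) := by
      intro β hβ
      obtain ⟨c, h1, _, h3, h4⟩ := hg β hβ
      refine ⟨c, h1, fun x => ?_, h4⟩
      rw [h3 x]
      exact Finset.sum_erase_add _ _ hβ
    have hpos : ∀ β ∈ ({![0,0], ![2,0], ![0,2], ![4,0], ![0,4], ![2,2]} :
        Finset (Fin 2 → ℕ)), ∀ x, 0 ≤ g β x := by
      intro β hβ x
      exact (key β hβ).choose_spec.2.2 x
    have hz : ∀ x : Fin 2 → ℝ, p x = 0 → g ![2,0] x = 0 := by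
      intro x hx
      have h0 : ∑ β ∈ ({![0,0], ![2,0], ![0,2], ![4,0], ![0,4], ![2,2]} :
          Finset (Fin 2 → ℕ)), g β x = 0 := by rw [← hsum x, hx]
      exact (Finset.sum_eq_zero_iff_of_nonneg (fun β hβ => hpos β hβ x)).mp h0 ![2,0] (by decide)
    obtain ⟨c0, N0, R0, _⟩ := key ![0,0] (by decide)
    obtain ⟨c1, N1, R1, P1⟩ := key ![2,0] (by decide)
    obtain ⟨c2, N2, R2, _⟩ := key ![0,2] (by decide)
    obtain ⟨c3, N3, R3, _⟩ := key ![4,0] (by decide)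
    obtain ⟨c4, N4, R4, _⟩ := key ![0,4] (by decide)
    obtain ⟨c5, N5, R5, _⟩ := key ![2,2] (by decide)
    have gv : ∀ (c : (Fin 2 → ℕ) → ℝ) (u v : ℝ),
        ∑ α ∈ ({![0,0], ![2,0], ![0,2], ![4,0], ![0,4], ![2,2]} : Finset (Fin 2 → ℕ)),
          c α * monom α ![u,v]
        = c ![0,0] + c ![2,0] * u^2 + c ![0,2] * v^2 + c ![4,0] * u^4 + c ![0,4] * v^4
            + c ![2,2] * (u^2*v^2) := by
      intro c u v
      rw [sumT]
      simp [mval]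
    -- abbreviations for √(1/2) and √2
    set s : ℝ := Real.sqrt (1/2) with hsdef
    have hs2 : s^2 = 1/2 := Real.sq_sqrt (by norm_num)
    have hs4 : s^4 = 1/4 := by
      have : s^4 = (s^2)^2 := by ring
      rw [this, hs2]; norm_num
    set r : ℝ := Real.sqrt 2 with hrdef
    have hq2 : r^2 = 2 := Real.sq_sqrt (by norm_num)
    have hq4 : r^4 = 4 := by
      have : r^4 = (r^2)^2 := by ring
      rw [this, hq2]; norm_num
    -- block for β = (2,0): circle vanishing forces c1 (2,0) ≥ 0
    have e10 := (R1 ![1,0]).symm.trans (hz ![1,0] (by rw [hp]; norm_num))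
    rw [gv] at e10; norm_num at e10
    have e01 := (R1 ![0,1]).symm.trans (hz ![0,1] (by rw [hp]; norm_num))
    rw [gv] at e01; norm_num at e01
    have ess := (R1 ![s,s]).symm.trans (hz ![s,s] (by rw [hp]; norm_num [hs2]))
    rw [gv] at ess
    rw [hs2, hs4] at ess
    have nq := P1 ![s,0]
    rw [R1, gv, hs2, hs4] at nq
    norm_num at nq
    have na := N1 ![0,0] (by decide)
    have nc := N1 ![0,2] (by decide)
    have nd := N1 ![4,0] (by decide)
    have ne' := N1 ![0,4] (by decide)
    have nf := N1 ![2,2] (by decide)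
    have hb1 : 0 ≤ c1 ![2,0] := by linarith
    -- nonnegativity of the (2,0)-coefficient in the other blocks
    have nb0 : 0 ≤ c0 ![2,0] := N0 ![2,0] (by decide)
    have nb2 : 0 ≤ c2 ![2,0] := N2 ![2,0] (by decide)
    have nb3 : 0 ≤ c3 ![2,0] := N3 ![2,0] (by decide)
    have nb4 : 0 ≤ c4 ![2,0] := N4 ![2,0] (by decide)
    have nb5 : 0 ≤ c5 ![2,0] := N5 ![2,0] (by decide)
    -- global evaluations at (0,0), (1,0), (√2, 0)
    have S0 := hsum ![0,0]
    rw [hp, sumT, R0, R1, R2, R3, R4, R5, gv, gv, gv, gv, gv, gv] at S0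
    norm_num at S0
    have S1 := hsum ![1,0]
    rw [hp, sumT, R0, R1, R2, R3, R4, R5, gv, gv, gv, gv, gv, gv] at S1
    norm_num at S1
    have S2 := hsum ![r,0]
    rw [hp, sumT, R0, R1, R2, R3, R4, R5, gv, gv, gv, gv, gv, gv] at S2
    rw [hq2, hq4] at S2
    norm_num at S2
    linarith
end
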